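/- arXiv:2212.13584 — 14 statements merged into one kernel-verified Lean document; each statement's English description precedes it below -/
import Mathlib

section
/- Let (g, μ, T) be a Hom-Lie algebra over a field of characteristic zero such that the twist map T is μ-equivariant and invertible. Then μ satisfies the Jacobi identity μ(x, μ(y,z)) + μ(y, μ(z,x)) + μ(z, μ(x,y)) = 0 for all x, y, z ∈ g; that is, (g, μ) is a Lie algebra. -/
theorem LinearMap.map_jacobiator_of_equivariant
    {R M : Type*} [CommSemiring R] [AddCommMonoid M] [Module R M]
    (μ : M →ₗ[R] M →ₗ[R] M) (T : M →ₗ[R] M)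
    (hequiv : ∀ x y : M, T (μ x y) = μ (T x) y) (x y z : M) :
    T (μ x (μ y z) + μ y (μ z x) + μ z (μ x y)) =
      μ (T x) (μ y z) + μ (T y) (μ z x) + μ (T z) (μ x y) := by
  simp only [map_add, hequiv]

theorem homLie_equivariant_invertible_is_lie_general
    {F : Type*} [Field F]
    {g : Type*} [AddCommGroup g] [Module F g]
    (μ : g →ₗ[F] g →ₗ[F] g) (T : g →ₗ[F] g)
    (hjac : ∀ x y z : g, μ (T x) (μ y z) + μ (T y) (μ z x) + μ (T z) (μ x y) = 0)
    (hequiv : ∀ x y : g, T (μ x y) = μ (T x) y)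
    (hinv : Function.Bijective T) :
    ∀ x y z : g, μ x (μ y z) + μ y (μ z x) + μ z (μ x y) = 0 := by
  intro x y z
  apply hinv.injective
  rw [LinearMap.map_jacobiator_of_equivariant μ T hequiv, hjac, map_zero]

/-- A Hom-Lie algebra `(g, μ, T)` over a field of characteristic zero with a
`μ`-equivariant and invertible twist map `T` satisfies the Jacobi identity,
i.e. `(g, μ)` is a Lie algebra. -/
theorem homLie_equivariant_invertible_is_lie
    {F : Type*} [Field F] [CharZero F]
    {g : Type*} [AddCommGroup g] [Module F g] [FiniteDimensional F g]
    (μ : g →ₗ[F] g →ₗ[F] g) (T : g →ₗ[F] g)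
    (hskew : ∀ x y : g, μ x y = - μ y x)
    (hjac : ∀ x y z : g, μ (T x) (μ y z) + μ (T y) (μ z x) + μ (T z) (μ x y) = 0)
    (hequiv : ∀ x y : g, T (μ x y) = μ (T x) y)
    (hinv : Function.Bijective T) :
    ∀ x y z : g, μ x (μ y z) + μ y (μ z x) + μ z (μ x y) = 0 :=
  homLie_equivariant_invertible_is_lie_general μ T hjac hequiv hinv
end

section
/- Let (g, μ, T, B) be a quadratic Hom-Lie algebra over a field of characteristic zero with μ-equivariant T, and define [x,y] := T(μ(x,y)) for all x, y ∈ g. Then [·,·] is a Lie bracket on g (skew-symmetric and satisfying the Jacobi identity), B is invariant under [·,·] (i.e. B([x,y],z) = B(x,[y,z]) for all x,y,z), and T([x,y]) = [T(x), y] for all x, y ∈ g; hence (g, [·,·], B) is a quadratic Lie algebra. -/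
/-!
Equivariance in the first slot together with skew-symmetry gives equivariance in the second
slot, `μ x (T y) = μ (T x) y`. With this, `T` can be moved freely through `μ`: each term of the
Jacobi sum for `[x,y] = T (μ x y)` becomes a term of the Hom-Jacobi identity for the triple
`x, T y, z`, and the invariance of `B` under `[·,·]` follows from that of `B` under `μ`
and the self-adjointness of `T`.
-/

namespace HomLie

variable {R g : Type*} [CommRing R] [AddCommGroup g] [Module R g]
  {μ : g →ₗ[R] g →ₗ[R] g} {T : g →ₗ[R] g}

theorem map_apply_right_eq_map_apply_left (hskew : ∀ x y : g, μ x y = - μ y x)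
    (hequiv : ∀ x y : g, T (μ x y) = μ (T x) y) (x y : g) :
    μ x (T y) = μ (T x) y := by
  rw [hskew x (T y), ← hequiv, hskew y x, map_neg, neg_neg, hequiv]

theorem jacobi_comp_of_equivariant
    (hjac : ∀ x y z : g, μ (T x) (μ y z) + μ (T y) (μ z x) + μ (T z) (μ x y) = 0)
    (hequiv : ∀ x y : g, T (μ x y) = μ (T x) y) (hright : ∀ x y : g, μ x (T y) = μ (T x) y)
    (x y z : g) :
    T (μ x (T (μ y z))) + T (μ y (T (μ z x))) + T (μ z (T (μ x y))) = 0 := by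
  have hx : T (μ x (T (μ y z))) = μ (T x) (μ (T y) z) := by rw [hequiv, hequiv]
  have hy : T (μ y (T (μ z x))) = μ (T (T y)) (μ z x) := by rw [hequiv y, hright]
  have hz : T (μ z (T (μ x y))) = μ (T z) (μ x (T y)) := by rw [hequiv z, hequiv x, hright]
  rw [hx, hy, hz]
  exact hjac x (T y) z

theorem invariant_comp_of_equivariant {B : g →ₗ[R] g →ₗ[R] R}
    (hBinv : ∀ x y z : g, B (μ x y) z = B x (μ y z)) (hTsa : ∀ x y : g, B (T x) y = B x (T y))
    (hequiv : ∀ x y : g, T (μ x y) = μ (T x) y) (hright : ∀ x y : g, μ x (T y) = μ (T x) y)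
    (x y z : g) :
    B (T (μ x y)) z = B x (T (μ y z)) := by
  rw [hTsa, hBinv, hright, ← hequiv]

end HomLie

theorem quadratic_homLie_gives_quadratic_lie_general
    {F : Type*} [Field F]
    {g : Type*} [AddCommGroup g] [Module F g]
    (μ : g →ₗ[F] g →ₗ[F] g) (T : g →ₗ[F] g) (B : g →ₗ[F] g →ₗ[F] F)
    (hskew : ∀ x y : g, μ x y = - μ y x)
    (hjac : ∀ x y z : g, μ (T x) (μ y z) + μ (T y) (μ z x) + μ (T z) (μ x y) = 0)
    (hequiv : ∀ x y : g, T (μ x y) = μ (T x) y)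
    (hBinv : ∀ x y z : g, B (μ x y) z = B x (μ y z))
    (hTsa : ∀ x y : g, B (T x) y = B x (T y)) :
    (∀ x y : g, T (μ x y) = - T (μ y x)) ∧
    (∀ x y z : g,
      T (μ x (T (μ y z))) + T (μ y (T (μ z x))) + T (μ z (T (μ x y))) = 0) ∧
    (∀ x y z : g, B (T (μ x y)) z = B x (T (μ y z))) ∧
    (∀ x y : g, T (T (μ x y)) = T (μ (T x) y)) := by
  have hright := HomLie.map_apply_right_eq_map_apply_left hskew hequiv
  refine ⟨fun x y => ?_, HomLie.jacobi_comp_of_equivariant hjac hequiv hright,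
    HomLie.invariant_comp_of_equivariant hBinv hTsa hequiv hright,
    fun x y => congrArg T (hequiv x y)⟩
  rw [hskew x y, map_neg]

/-- A quadratic Hom-Lie algebra `(g, μ, T, B)` with `μ`-equivariant `T` gives rise to a
quadratic Lie algebra `(g, [·,·], B)` with `[x,y] = T(μ(x,y))`, and
`T([x,y]) = [T(x), y]`. -/
theorem quadratic_homLie_gives_quadratic_lie
    {F : Type*} [Field F] [CharZero F]
    {g : Type*} [AddCommGroup g] [Module F g] [FiniteDimensional F g]
    (μ : g →ₗ[F] g →ₗ[F] g) (T : g →ₗ[F] g) (B : g →ₗ[F] g →ₗ[F] F)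
    (hskew : ∀ x y : g, μ x y = - μ y x)
    (hjac : ∀ x y z : g, μ (T x) (μ y z) + μ (T y) (μ z x) + μ (T z) (μ x y) = 0)
    (hequiv : ∀ x y : g, T (μ x y) = μ (T x) y)
    (hBsymm : ∀ x y : g, B x y = B y x)
    (hBnondeg : ∀ x : g, (∀ y : g, B x y = 0) → x = 0)
    (hBinv : ∀ x y z : g, B (μ x y) z = B x (μ y z))
    (hTsa : ∀ x y : g, B (T x) y = B x (T y)) :
    (∀ x y : g, T (μ x y) = - T (μ y x)) ∧
    (∀ x y z : g,
      T (μ x (T (μ y z))) + T (μ y (T (μ z x))) + T (μ z (T (μ x y))) = 0) ∧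
    (∀ x y z : g, B (T (μ x y)) z = B x (T (μ y z))) ∧
    (∀ x y : g, T (T (μ x y)) = T (μ (T x) y)) :=
  quadratic_homLie_gives_quadratic_lie_general μ T B hskew hjac hequiv hBinv hTsa
end

section
/- Let (g, μ, T, B) be a quadratic Hom-Lie algebra over a field of characteristic zero with μ-equivariant T, and let [x,y] := T(μ(x,y)). Then for every x ∈ g the linear map ad_μ(x) := μ(x, ·) : g → g is a derivation of the Lie algebra (g, [·,·]), i.e. ad_μ(x)([y,z]) = [ad_μ(x)(y), z] + [y, ad_μ(x)(z)] for all y, z ∈ g, and ad_μ(x) is anti-self-adjoint with respect to B, i.e. B(ad_μ(x)(y), z) = −B(y, ad_μ(x)(z)) for all y, z ∈ g. -/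
/-!
Skew-symmetry and equivariance let `T` move across `μ`: `μ (T a) b = T (μ a b) = μ a (T b)`.
Moving `T` onto the outer argument turns each of the three terms of the derivation identity
into a term of the Hom-Jacobi identity.
-/

section HomLie

variable {R M : Type*} [CommRing R] [AddCommGroup M] [Module R M]
  {μ : M →ₗ[R] M →ₗ[R] M} {T : M →ₗ[R] M}

theorem apply_map_left_eq_apply_map_right (hskew : ∀ x y : M, μ x y = - μ y x)
    (hequiv : ∀ x y : M, T (μ x y) = μ (T x) y) (a b : M) :
    μ (T a) b = μ a (T b) := by
  rw [← hequiv, hskew, map_neg, hequiv, ← hskew]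

theorem apply_map_apply_eq_add_of_homJacobi (hskew : ∀ x y : M, μ x y = - μ y x)
    (hjac : ∀ x y z : M, μ (T x) (μ y z) + μ (T y) (μ z x) + μ (T z) (μ x y) = 0)
    (hequiv : ∀ x y : M, T (μ x y) = μ (T x) y) (x y z : M) :
    μ x (T (μ y z)) = T (μ (μ x y) z) + T (μ y (μ x z)) := by
  have hmove := apply_map_left_eq_apply_map_right hskew hequiv
  calc μ x (T (μ y z)) = μ (T x) (μ y z) := (hmove x _).symm
    _ = -(μ (T z) (μ x y) + μ (T y) (μ z x)) := by
      rw [← add_eq_zero_iff_eq_neg, add_comm (μ (T z) _), ← add_assoc, hjac]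
    _ = μ (μ x y) (T z) + μ (T y) (μ x z) := by
      rw [neg_add, ← hskew, hskew x z, map_neg]
    _ = T (μ (μ x y) z) + T (μ y (μ x z)) := by
      rw [hequiv (μ x y), hequiv y, hmove (μ x y)]

theorem apply_apply_eq_neg_apply_apply_of_invariant {B : M →ₗ[R] M →ₗ[R] R}
    (hskew : ∀ x y : M, μ x y = - μ y x)
    (hBinv : ∀ x y z : M, B (μ x y) z = B x (μ y z)) (x y z : M) :
    B (μ x y) z = - B y (μ x z) := by
  rw [hskew, map_neg, LinearMap.neg_apply, hBinv]

end HomLie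

theorem ad_mu_is_antiselfadjoint_derivation_general
    {F : Type*} [Field F]
    {g : Type*} [AddCommGroup g] [Module F g]
    (μ : g →ₗ[F] g →ₗ[F] g) (T : g →ₗ[F] g) (B : g →ₗ[F] g →ₗ[F] F)
    (hskew : ∀ x y : g, μ x y = - μ y x)
    (hjac : ∀ x y z : g, μ (T x) (μ y z) + μ (T y) (μ z x) + μ (T z) (μ x y) = 0)
    (hequiv : ∀ x y : g, T (μ x y) = μ (T x) y)
    (hBinv : ∀ x y z : g, B (μ x y) z = B x (μ y z)) :
    (∀ x y z : g,
      μ x (T (μ y z)) = T (μ (μ x y) z) + T (μ y (μ x z))) ∧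
    (∀ x y z : g, B (μ x y) z = - B y (μ x z)) :=
  ⟨apply_map_apply_eq_add_of_homJacobi hskew hjac hequiv,
    apply_apply_eq_neg_apply_apply_of_invariant hskew hBinv⟩

/-- For a quadratic Hom-Lie algebra `(g, μ, T, B)` with `μ`-equivariant `T` and
`[x,y] := T(μ(x,y))`, each `ad_μ(x) = μ(x,·)` is a derivation of the Lie algebra
`(g, [·,·])` and is anti-self-adjoint with respect to `B`. -/
theorem ad_mu_is_antiselfadjoint_derivation
    {F : Type*} [Field F] [CharZero F]
    {g : Type*} [AddCommGroup g] [Module F g] [FiniteDimensional F g]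
    (μ : g →ₗ[F] g →ₗ[F] g) (T : g →ₗ[F] g) (B : g →ₗ[F] g →ₗ[F] F)
    (hskew : ∀ x y : g, μ x y = - μ y x)
    (hjac : ∀ x y z : g, μ (T x) (μ y z) + μ (T y) (μ z x) + μ (T z) (μ x y) = 0)
    (hequiv : ∀ x y : g, T (μ x y) = μ (T x) y)
    (hBsymm : ∀ x y : g, B x y = B y x)
    (hBnondeg : ∀ x : g, (∀ y : g, B x y = 0) → x = 0)
    (hBinv : ∀ x y z : g, B (μ x y) z = B x (μ y z))
    (hTsa : ∀ x y : g, B (T x) y = B x (T y)) :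
    (∀ x y z : g,
      μ x (T (μ y z)) = T (μ (μ x y) z) + T (μ y (μ x z))) ∧
    (∀ x y z : g, B (μ x y) z = - B y (μ x z)) :=
  ad_mu_is_antiselfadjoint_derivation_general μ T B hskew hjac hequiv hBinv
end

section
/- Let (g, μ, T, B) be a quadratic Hom-Lie algebra over an algebraically closed field of characteristic zero with μ-equivariant T and dim Ker(T) = r > 0, and let V be any r-dimensional vector space. Then G := g ⊕ V carries a Lie bracket [·,·]_G and a nondegenerate symmetric bilinear form B_G invariant under [·,·]_G (i.e. B_G([a,b]_G, c) = B_G(a, [b,c]_G)) such that: (i) V is contained in the center of (G, [·,·]_G); (ii) V is isotropic for B_G, i.e. B_G(u,v) = 0 for all u, v ∈ V; and (iii) the projection π : G → g satisfies π([x+u, y+v]_G) = T(μ(x,y)) for all x, y ∈ g, u, v ∈ V, so G is a central extension by V of the Lie algebra (g, [·,·]) with [x,y] = T(μ(x,y)). -/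
set_option maxHeartbeats 2000000


/-- A quadratic Hom-Lie algebra `(g, μ, T, B)` over an algebraically closed field of
characteristic zero with `μ`-equivariant `T` and `dim Ker(T) = r > 0` gives, for any
`r`-dimensional space `V`, a Lie bracket and an invariant nondegenerate symmetric
bilinear form on `G = g ⊕ V` making `V` central and isotropic, such that the
projection of the bracket to `g` is `[x,y] = T(μ(x,y))`. -/
theorem quadratic_homLie_central_extension_exists
    {F : Type*} [Field F] [CharZero F] [IsAlgClosed F]
    {g : Type*} [AddCommGroup g] [Module F g] [FiniteDimensional F g]
    {V : Type*} [AddCommGroup V] [Module F V] [FiniteDimensional F V]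
    {r : ℕ} (hr : 0 < r)
    (μ : g →ₗ[F] g →ₗ[F] g) (T : g →ₗ[F] g) (B : g →ₗ[F] g →ₗ[F] F)
    (hμskew : ∀ x y : g, μ x y = - μ y x)
    (hjac : ∀ x y z : g, μ (T x) (μ y z) + μ (T y) (μ z x) + μ (T z) (μ x y) = 0)
    (hequiv : ∀ x y : g, T (μ x y) = μ (T x) y)
    (hBsymm : ∀ x y : g, B x y = B y x)
    (hBnondeg : ∀ x : g, (∀ y : g, B x y = 0) → x = 0)
    (hBinv : ∀ x y z : g, B (μ x y) z = B x (μ y z))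
    (hTsa : ∀ x y : g, B (T x) y = B x (T y))
    (hkerT : Module.finrank F (LinearMap.ker T) = r)
    (hV : Module.finrank F V = r) :
    ∃ (brG : (g × V) →ₗ[F] (g × V) →ₗ[F] (g × V))
      (BG : (g × V) →ₗ[F] (g × V) →ₗ[F] F),
      (∀ p q : g × V, brG p q = - brG q p) ∧
      (∀ p q s : g × V, brG p (brG q s) + brG q (brG s p) + brG s (brG p q) = 0) ∧
      (∀ p q : g × V, BG p q = BG q p) ∧
      (∀ p : g × V, (∀ q : g × V, BG p q = 0) → p = 0) ∧
      (∀ p q s : g × V, BG (brG p q) s = BG p (brG q s)) ∧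
      (∀ (u : V) (q : g × V), brG ((0 : g), u) q = 0) ∧
      (∀ u w : V, BG ((0 : g), u) ((0 : g), w) = 0) ∧
      (∀ p q : g × V, (brG p q).1 = T (μ p.1 q.1)) := by
  classical
  -- a projection onto `ker T`
  obtain ⟨Kc, hKc⟩ := Submodule.exists_isCompl (LinearMap.ker T)
  set πk : g →ₗ[F] LinearMap.ker T :=
    Submodule.linearProjOfIsCompl _ _ hKc with hπkdef
  set π : g →ₗ[F] g := (LinearMap.ker T).subtype ∘ₗ πk with hπdef
  -- a projection onto `range T`
  obtain ⟨Rc, hRc⟩ := Submodule.exists_isCompl (LinearMap.range T)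
  set pR : g →ₗ[F] LinearMap.range T :=
    Submodule.linearProjOfIsCompl _ _ hRc with hpRdef
  set Pf : g →ₗ[F] g := (LinearMap.range T).subtype ∘ₗ pR with hPfdef
  -- a right inverse of `T` on its range
  obtain ⟨σ, hσ⟩ := T.rangeRestrict.exists_rightInverse_of_surjective
    (LinearMap.range_rangeRestrict T)
  set m : g →ₗ[F] g := σ ∘ₗ pR with hmdef
  set A : g →ₗ[F] g := LinearMap.id - π ∘ₗ (LinearMap.id - T) with hAdef
  set Ψ : g →ₗ[F] g := A ∘ₗ m with hΨdef
  have hVk : Module.finrank F V = Module.finrank F (LinearMap.ker T) := by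
    rw [hV, hkerT]
  set ebar : V ≃ₗ[F] LinearMap.ker T := LinearEquiv.ofFinrankEq _ _ hVk with hebardef
  set e : V →ₗ[F] g := (LinearMap.ker T).subtype ∘ₗ ebar.toLinearMap with hedef
  set κ : g →ₗ[F] LinearMap.ker T := πk ∘ₗ (LinearMap.id - T) with hκdef
  -- basic facts
  have hTe : ∀ u : V, T (e u) = 0 := fun u => (ebar u).2
  have hπmem : ∀ x : g, T (π x) = 0 := fun x => (πk x).2
  have hπid : ∀ x : g, T x = 0 → π x = x := by
    intro x hx
    have : πk x = ⟨x, hx⟩ := Submodule.linearProjOfIsCompl_apply_left hKc ⟨x, hx⟩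
    simp [hπdef, this]
  have hPfT : ∀ x : g, Pf (T x) = T x := by
    intro x
    have : pR (T x) = ⟨T x, LinearMap.mem_range_self T x⟩ :=
      Submodule.linearProjOfIsCompl_apply_left hRc ⟨T x, LinearMap.mem_range_self T x⟩
    simp [hPfdef, this]
  have hTσ : ∀ w : LinearMap.range T, T (σ w) = (w : g) := by
    intro w
    have := congrArg (fun f => ((f w : LinearMap.range T) : g)) hσ
    simpa using this
  have hTm : ∀ y : g, T (m y) = Pf y := by
    intro y; simp [hmdef, hPfdef, hTσ]
  have hmT : ∀ x : g, T (m (T x) - x) = 0 := by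
    intro x; rw [map_sub, hTm, hPfT, sub_self]
  have hA0 : ∀ x : g, T x = 0 → A x = 0 := by
    intro x hx
    simp [hAdef, hx, hπid x hx]
  have hAx : ∀ x : g, A x = x - π (x - T x) := by
    intro x; simp [hAdef]
  have hBπT : ∀ w z : g, B (π w) (T z) = 0 := by
    intro w z
    rw [← hTsa, hπmem, map_zero, LinearMap.zero_apply]
  have hAB : ∀ w z : g, B (A w) (T z) = B w (T z) := by
    intro w z
    rw [hAx, map_sub, LinearMap.sub_apply, hBπT, sub_zero]
  have hΨa : ∀ x : g, Ψ x = A (m x) := fun _ => rfl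
  have hΨT : ∀ x : g, Ψ (T x) = A x := by
    intro x
    have h1 : m (T x) = x + (m (T x) - x) := by abel
    rw [hΨa, h1, map_add, hA0 _ (hmT x), add_zero]
  have hBeT : ∀ (u : V) (x : g), B (e u) (T x) = 0 := by
    intro u x
    rw [← hTsa, hTe, map_zero, LinearMap.zero_apply]
  -- the modified form on `g`
  set Cf : g → g → F := fun x y => B (Ψ x) y + B (Ψ y) x - B (Ψ x) (Pf y) with hCfdef
  have hCfap : ∀ x y : g, Cf x y = B (Ψ x) y + B (Ψ y) x - B (Ψ x) (Pf y) :=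
    fun _ _ => rfl
  have hCT : ∀ x y : g, Cf (T x) y = B (A x) y := by
    intro x y
    have h2 : B (Ψ y) (T x) = B x (Pf y) := by
      have h2a : B (Ψ y) (T x) = B (m y) (T x) := hAB (m y) x
      rw [h2a, ← hTsa, hTm, hBsymm]
    have h3 : B (A x) (Pf y) = B x (Pf y) := by
      rw [← hTm y, hAB]
    rw [hCfap, hΨT, h2, h3]
    ring
  have hcross : ∀ a b : g, B (Ψ a) (Pf b) = B (Ψ b) (Pf a) := by
    intro a b
    rw [hΨa a, hΨa b, ← hTm b, ← hTm a, hAB, hAB, ← hTsa, hBsymm]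
  have hCsymm : ∀ x y : g, Cf x y = Cf y x := by
    intro x y
    rw [hCfap, hCfap, hcross, hBsymm (Ψ x) y, hBsymm (Ψ y) x]
    ring
  have hCA : ∀ a y : g, Cf (T a) y + B (π (a - T a)) y = B a y := by
    intro a y
    rw [hCT, hAx, map_sub, LinearMap.sub_apply]
    ring
  -- equivariance variants
  have L2 : ∀ a b : g, μ a (T b) = μ (T a) b := by
    intro a b
    rw [hμskew a (T b), ← hequiv b a, ← map_neg, ← hμskew a b, hequiv a b]
  -- define the bracket and the bilinear form on `G = g × V`
  set brG : (g × V) →ₗ[F] (g × V) →ₗ[F] (g × V) :=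
    LinearMap.mk₂ F
      (fun p q => (T (μ p.1 q.1), ebar.symm (κ (μ p.1 q.1))))
      (by intro p p' q; simp [Prod.ext_iff])
      (by intro c p q; simp [Prod.ext_iff])
      (by intro p q q'; simp [Prod.ext_iff])
      (by intro c p q; simp [Prod.ext_iff]) with hbrdef
  set BG : (g × V) →ₗ[F] (g × V) →ₗ[F] F :=
    LinearMap.mk₂ F
      (fun p q => Cf p.1 q.1 + B (e p.2) q.1 + B (e q.2) p.1)
      (by intro p p' q; simp [hCfdef]; ring)
      (by intro c p q; simp [hCfdef]; ring)
      (by intro p q q'; simp [hCfdef]; ring)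
      (by intro c p q; simp [hCfdef]; ring) with hBGdef
  have hbr : ∀ p q : g × V,
      brG p q = (T (μ p.1 q.1), ebar.symm (κ (μ p.1 q.1))) := fun p q => rfl
  have hBGap : ∀ p q : g × V,
      BG p q = Cf p.1 q.1 + B (e p.2) q.1 + B (e q.2) p.1 := fun p q => rfl
  have hκval : ∀ a : g, ((κ a : LinearMap.ker T) : g) = π (a - T a) := by
    intro a; simp [hκdef, hπdef]
  have heκ : ∀ a : g, e (ebar.symm (κ a)) = π (a - T a) := by
    intro a
    rw [hedef]
    simp only [LinearMap.coe_comp, Function.comp_apply, LinearEquiv.coe_coe,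
      Submodule.coe_subtype, LinearEquiv.apply_symm_apply]
    exact hκval a
  refine ⟨brG, BG, ?_, ?_, ?_, ?_, ?_, ?_, ?_, ?_⟩
  · -- skew-symmetry
    intro p q
    rw [hbr, hbr, Prod.neg_mk, hμskew p.1 q.1]
    simp
  · -- Jacobi identity
    intro p q s
    obtain ⟨x, u⟩ := p; obtain ⟨y, v⟩ := q; obtain ⟨z, w⟩ := s
    simp only [hbr]
    rw [Prod.ext_iff]
    constructor
    · -- first components
      show T (μ x (T (μ y z))) + T (μ y (T (μ z x))) + T (μ z (T (μ x y))) = 0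
      have e1 : T (μ x (T (μ y z))) = μ (T x) (μ (T y) z) := by
        rw [hequiv, hequiv y z]
      have e2 : T (μ y (T (μ z x))) = μ (T (T y)) (μ z x) := by
        rw [hequiv, ← L2 (T y) (μ z x), hequiv z x]
      have e3 : T (μ z (T (μ x y))) = μ (T z) (μ x (T y)) := by
        rw [hequiv, hequiv x y, ← L2 x y]
      rw [e1, e2, e3]
      exact hjac x (T y) z
    · -- second components
      show ebar.symm (κ (μ x (T (μ y z)))) + ebar.symm (κ (μ y (T (μ z x))))
          + ebar.symm (κ (μ z (T (μ x y)))) = 0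
      have : μ x (T (μ y z)) + μ y (T (μ z x)) + μ z (T (μ x y)) = 0 := by
        rw [L2 x (μ y z), L2 y (μ z x), L2 z (μ x y)]
        exact hjac x y z
      rw [← map_add, ← map_add, ← map_add, ← map_add, this, map_zero, map_zero]
  · -- symmetry of BG
    intro p q
    rw [hBGap, hBGap, hCsymm]
    ring
  · -- nondegeneracy of BG
    intro p hp
    obtain ⟨x₀, u⟩ := p
    have hrefl : B.IsRefl := fun a b h => by rw [hBsymm]; exact h
    have hnd : LinearMap.BilinForm.Nondegenerate B := (hrefl.nondegenerate_iff_separatingLeft).2 hBnondeg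
    have step1 : ∀ v : V, B (e v) x₀ = 0 := by
      intro v
      have := hp (0, v)
      rw [hBGap] at this
      simpa [hCfdef] using this
    have horth1 : LinearMap.BilinForm.orthogonal B (LinearMap.range T) = LinearMap.ker T := by
      ext w
      simp only [LinearMap.BilinForm.mem_orthogonal_iff, LinearMap.BilinForm.IsOrtho,
        LinearMap.mem_ker]
      constructor
      · intro h
        apply hBnondeg
        intro y
        rw [hBsymm, ← hTsa]
        exact h (T y) (LinearMap.mem_range_self T y)
      · intro h n hn
        obtain ⟨y, rfl⟩ := hn
        rw [hTsa, h, map_zero]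
    have hx₀mem : x₀ ∈ LinearMap.range T := by
      rw [← LinearMap.BilinForm.orthogonal_orthogonal hnd hrefl (LinearMap.range T), horth1,
        LinearMap.BilinForm.mem_orthogonal_iff]
      intro n hn
      have : B (e (ebar.symm ⟨n, hn⟩)) x₀ = 0 := step1 _
      rw [hedef] at this
      simpa using this
    obtain ⟨z, hz⟩ := hx₀mem
    have step3 : ∀ y : g, B (A z + e u) y = 0 := by
      intro y
      have h0 := hp (y, 0)
      rw [hBGap] at h0
      simp only [map_zero, LinearMap.zero_apply] at h0
      have : Cf x₀ y + B (e u) y = 0 := by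
        simpa using h0
      rw [← hz, hCT] at this
      rw [map_add, LinearMap.add_apply]
      exact this
    have hAzeu : A z + e u = 0 := hBnondeg _ step3
    have h6 : π (A z) + e u = 0 := by
      have h6a := congrArg π hAzeu
      rw [map_add, map_zero, hπid _ (hTe u)] at h6a
      exact h6a
    have h7 : π (A z) = π z - π (z - T z) := by
      rw [hAx, map_sub, hπid _ (hπmem _)]
    have hzz : z - π z = 0 := by
      have h8 : A z + e u - (π (A z) + e u) = 0 := by rw [hAzeu, h6]; simp
      rw [h7, hAx] at h8
      calc z - π z = z - π (z - T z) + e u - (π z - π (z - T z) + e u) := by abel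
      _ = 0 := h8
    have hx₀0 : x₀ = 0 := by
      have hzk : z = π z := by
        have := hzz; rwa [sub_eq_zero] at this
      rw [← hz, hzk, hπmem]
    have hTz : T z = 0 := by rw [← hz] at hx₀0; exact hx₀0
    have heu : e u = 0 := by
      have := hAzeu
      rw [hA0 z hTz, zero_add] at this
      exact this
    have hu : u = 0 := by
      have h1 : ((ebar u : LinearMap.ker T) : g) = 0 := by
        rw [hedef] at heu; simpa using heu
      have h2 : ebar u = 0 := Subtype.ext h1
      have := congrArg ebar.symm h2
      simpa using this
    rw [hx₀0, hu]
    rfl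
  · -- invariance
    intro p q s
    obtain ⟨x, u⟩ := p; obtain ⟨y, v⟩ := q; obtain ⟨z, w⟩ := s
    rw [hbr, hbr, hBGap, hBGap]
    simp only
    rw [heκ, heκ, hBeT, hBeT]
    have lhs : Cf (T (μ x y)) z + B (π (μ x y - T (μ x y))) z = B (μ x y) z := hCA _ _
    have rhs : Cf x (T (μ y z)) + B (π (μ y z - T (μ y z))) x = B (μ y z) x := by
      rw [hCsymm]; exact hCA _ _
    have key : B (μ x y) z = B (μ y z) x := by rw [hBinv, hBsymm]
    calc Cf (T (μ x y)) z + B (π (μ x y - T (μ x y))) z + 0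
        = B (μ x y) z := by rw [add_zero]; exact lhs
      _ = B (μ y z) x := key
      _ = Cf x (T (μ y z)) + 0 + B (π (μ y z - T (μ y z))) x := by
          rw [add_zero, ← rhs]
  · -- V is central
    intro u q
    rw [hbr]
    simp [Prod.ext_iff]
  · -- V is isotropic
    intro u w
    rw [hBGap]
    simp [hCfdef]
  · -- projection of the bracket
    intro p q
    rw [hbr]
end

section
/- In the central-extension setup (see context), the bilinear form B_G satisfies B_G([x+u, y+v]_G, z+w) = B(μ(x,y), z) and B_G(x+u, [y+v, z+w]_G) = B(x, μ(y,z)) for all x, y, z ∈ g and u, v, w ∈ V; consequently B_G is invariant under the bracket [·,·]_G. -/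
/-- In the central-extension setup, `B_G([x+u, y+v]_G, z+w) = B(μ(x,y), z)` and
`B_G(x+u, [y+v, z+w]_G) = B(x, μ(y,z))`; consequently `B_G` is invariant under
the bracket `[·,·]_G` (where `[x+u, y+v]_G = k(μ(x,y))`). -/
theorem BG_invariant_under_bracketG
    {F : Type*} [Field F] [CharZero F] [IsAlgClosed F]
    {g : Type*} [AddCommGroup g] [Module F g] [FiniteDimensional F g]
    {V : Type*} [AddCommGroup V] [Module F V]
    {r : ℕ} (hr : 0 < r)
    (μ : g →ₗ[F] g →ₗ[F] g) (T : g →ₗ[F] g) (B : g →ₗ[F] g →ₗ[F] F)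
    (hμskew : ∀ x y : g, μ x y = - μ y x)
    (hjac : ∀ x y z : g, μ (T x) (μ y z) + μ (T y) (μ z x) + μ (T z) (μ x y) = 0)
    (hequiv : ∀ x y : g, T (μ x y) = μ (T x) y)
    (hBsymm : ∀ x y : g, B x y = B y x)
    (hBnondeg : ∀ x : g, (∀ y : g, B x y = 0) → x = 0)
    (hBinv : ∀ x y z : g, B (μ x y) z = B x (μ y z))
    (hTsa : ∀ x y : g, B (T x) y = B x (T y))
    (hkerT : Module.finrank F (LinearMap.ker T) = r)
    (𝔞 : Submodule F g) (hcompl : IsCompl 𝔞 (LinearMap.range T))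
    (a : Fin r → g) (ha𝔞 : ∀ i, a i ∈ 𝔞)
    (haind : LinearIndependent F a)
    (haspan : Submodule.span F (Set.range a) = 𝔞)
    (v : Module.Basis (Fin r) F V)
    (BG : (g × V) →ₗ[F] (g × V) →ₗ[F] F)
    (hBGsymm : ∀ p q : g × V, BG p q = BG q p)
    (hBG1 : ∀ x y : g, BG (T x, (0 : V)) (T y, (0 : V)) = B (T x) y)
    (hBG2 : ∀ x ∈ 𝔞, ∀ (u : V) (y : g), BG (x, u) (T y, (0 : V)) = 0)
    (hBG3 : ∀ x ∈ 𝔞, ∀ y ∈ 𝔞, BG (x, (0 : V)) (y, (0 : V)) = 0)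
    (hBG4 : ∀ u w : V, BG ((0 : g), u) ((0 : g), w) = 0)
    (hBG5 : ∀ i j : Fin r, BG (a i, (0 : V)) ((0 : g), v j) = if i = j then (1 : F) else 0)
    (k : g →ₗ[F] g × V)
    (hk : ∀ x : g, k x = (T x, ∑ i, B (a i) x • v i))
    :
    (∀ (x y z : g) (w : V), BG (k (μ x y)) (z, w) = B (μ x y) z) ∧
    (∀ (x y z : g) (u : V), BG (x, u) (k (μ y z)) = B x (μ y z)) ∧
    (∀ (x y z : g) (u w : V), BG (k (μ x y)) (z, w) = BG (x, u) (k (μ y z))) := by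
  have key : ∀ (x z : g) (w : V), BG (k x) (z, w) = B x z := by
    intro x z w
    have hz : z ∈ 𝔞 ⊔ LinearMap.range T := by
      rw [hcompl.sup_eq_top]; trivial
    obtain ⟨z1, hz1, z2, hz2, rfl⟩ := Submodule.mem_sup.mp hz
    obtain ⟨y, rfl⟩ := hz2
    have hz1' := hz1
    rw [← haspan] at hz1'
    obtain ⟨c, rfl⟩ := (Finsupp.mem_span_range_iff_exists_finsupp.mp hz1')
    -- rewrite k
    rw [hk]
    -- decompose pairs
    have e0 : ((T x, ∑ i, B (a i) x • v i) : g × V)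
        = (T x, (0 : V)) + ((0 : g), ∑ i, B (a i) x • v i) := by
      simp [Prod.ext_iff]
    have e1 : (((c.sum fun i r => r • a i) + T y, w) : g × V)
        = ((c.sum fun i r => r • a i), (0 : V)) + (T y, (0 : V)) + ((0 : g), w) := by
      simp [Prod.ext_iff]
    rw [e0, e1]
    simp only [map_add, LinearMap.add_apply]
    have t1 : BG ((c.sum fun i r => r • a i), (0 : V)) (T x, (0 : V)) = 0 :=
      hBG2 _ hz1 0 x
    have t1' : BG (T x, (0 : V)) ((c.sum fun i r => r • a i), (0 : V)) = 0 := by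
      rw [hBGsymm]; exact t1
    have t2 : BG (T x, (0 : V)) (T y, (0 : V)) = B x (T y) := by
      rw [hBG1, hTsa]
    have t3 : BG (T x, (0 : V)) ((0 : g), w) = 0 := by
      rw [hBGsymm]; exact hBG2 0 (Submodule.zero_mem _) w x
    have t5 : BG ((0 : g), ∑ i, B (a i) x • v i) (T y, (0 : V)) =
        0 := hBG2 0 (Submodule.zero_mem _) _ y
    have t6 : BG ((0 : g), ∑ i, B (a i) x • v i) ((0 : g), w) = 0 := hBG4 _ _
    have eu : ((0 : g), ∑ i, B (a i) x • v i)
        = ∑ i, B (a i) x • (((0 : g), v i) : g × V) := by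
      simp [Prod.ext_iff, Prod.fst_sum, Prod.snd_sum]
    have ez : (((c.sum fun i r => r • a i), (0 : V)) : g × V)
        = c.sum fun i r => r • ((a i, (0 : V)) : g × V) := by
      rw [Finsupp.sum, Finsupp.sum]
      simp [Prod.ext_iff, Prod.fst_sum, Prod.snd_sum]
    have t4 : BG ((0 : g), ∑ i, B (a i) x • v i) ((c.sum fun i r => r • a i), (0 : V))
        = c.sum fun i r => r * B (a i) x := by
      rw [eu, ez, Finsupp.sum, Finsupp.sum]
      simp only [map_sum, map_smul, LinearMap.sum_apply, LinearMap.smul_apply,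
        smul_eq_mul]
      refine Finset.sum_congr rfl fun j hj => ?_
      congr 1
      have hpt : ∀ i, BG ((0 : g), v i) ((a j, (0:V))) = if j = i then 1 else 0 := by
        intro i; rw [hBGsymm]; exact hBG5 j i
      simp only [hpt, mul_ite, mul_one, mul_zero]
      simp
    have hB : B x (c.sum fun i r => r • a i) = c.sum fun i r => r * B (a i) x := by
      rw [Finsupp.sum, map_sum, Finsupp.sum]
      refine Finset.sum_congr rfl fun i _ => ?_
      rw [map_smul, smul_eq_mul, hBsymm]
    rw [t1', t2, t3, t4, t5, t6, hB]
    ring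
  refine ⟨fun x y z w => key _ _ _, fun x y z u => ?_, fun x y z u w => ?_⟩
  · rw [hBGsymm, key, hBsymm]
  · rw [key, hBGsymm, key]
    rw [hBinv, hBsymm]
end

section
/- In the central-extension setup (see context), the maps k and B_G satisfy B(x, y) = B_G(k(x), y + u) for all x, y ∈ g and all u ∈ V; moreover the image of k equals the B_G-orthogonal complement of V in G, i.e. Im(k) = V^⊥ = Im(T) ⊕ V. -/
/-- In the central-extension setup, `B(x,y) = B_G(k(x), y+u)` for all `x, y ∈ g`
and `u ∈ V`, and `Im(k) = V^⊥ = Im(T) ⊕ V` inside `G = g ⊕ V`. -/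
theorem range_k_eq_V_perp
    {F : Type*} [Field F] [CharZero F] [IsAlgClosed F]
    {g : Type*} [AddCommGroup g] [Module F g] [FiniteDimensional F g]
    {V : Type*} [AddCommGroup V] [Module F V]
    {r : ℕ} (hr : 0 < r)
    (μ : g →ₗ[F] g →ₗ[F] g) (T : g →ₗ[F] g) (B : g →ₗ[F] g →ₗ[F] F)
    (hμskew : ∀ x y : g, μ x y = - μ y x)
    (hjac : ∀ x y z : g, μ (T x) (μ y z) + μ (T y) (μ z x) + μ (T z) (μ x y) = 0)
    (hequiv : ∀ x y : g, T (μ x y) = μ (T x) y)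
    (hBsymm : ∀ x y : g, B x y = B y x)
    (hBnondeg : ∀ x : g, (∀ y : g, B x y = 0) → x = 0)
    (hBinv : ∀ x y z : g, B (μ x y) z = B x (μ y z))
    (hTsa : ∀ x y : g, B (T x) y = B x (T y))
    (hkerT : Module.finrank F (LinearMap.ker T) = r)
    (𝔞 : Submodule F g) (hcompl : IsCompl 𝔞 (LinearMap.range T))
    (a : Fin r → g) (ha𝔞 : ∀ i, a i ∈ 𝔞)
    (haind : LinearIndependent F a)
    (haspan : Submodule.span F (Set.range a) = 𝔞)
    (v : Module.Basis (Fin r) F V)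
    (BG : (g × V) →ₗ[F] (g × V) →ₗ[F] F)
    (hBGsymm : ∀ p q : g × V, BG p q = BG q p)
    (hBG1 : ∀ x y : g, BG (T x, (0 : V)) (T y, (0 : V)) = B (T x) y)
    (hBG2 : ∀ x ∈ 𝔞, ∀ (u : V) (y : g), BG (x, u) (T y, (0 : V)) = 0)
    (hBG3 : ∀ x ∈ 𝔞, ∀ y ∈ 𝔞, BG (x, (0 : V)) (y, (0 : V)) = 0)
    (hBG4 : ∀ u w : V, BG ((0 : g), u) ((0 : g), w) = 0)
    (hBG5 : ∀ i j : Fin r, BG (a i, (0 : V)) ((0 : g), v j) = if i = j then (1 : F) else 0)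
    (k : g →ₗ[F] g × V)
    (hk : ∀ x : g, k x = (T x, ∑ i, B (a i) x • v i))
    :
    (∀ (x y : g) (u : V), B x y = BG (k x) (y, u)) ∧
    (Set.range k = {w : g × V | ∀ u : V, BG w ((0 : g), u) = 0}) ∧
    ({w : g × V | ∀ u : V, BG w ((0 : g), u) = 0}
      = {p : g × V | p.1 ∈ LinearMap.range T}) := by
  classical
  -- every element of g decomposes
  have hsplit : ∀ (y : g), ∃ (c : Fin r → F) (z : g), y = (∑ i, c i • a i) + T z := by
    intro y
    have hy : y ∈ 𝔞 ⊔ LinearMap.range T := by rw [hcompl.sup_eq_top]; trivial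
    obtain ⟨ya, hya, w, hw, hs⟩ := Submodule.mem_sup.mp hy
    obtain ⟨z, rfl⟩ := hw
    rw [← haspan] at hya
    obtain ⟨c, hc⟩ := (Submodule.mem_span_range_iff_exists_fun F).mp hya
    exact ⟨c, z, by rw [hc, hs]⟩
  -- pairs as sums
  have hpairL : ∀ (c : Fin r → F), ((∑ i, c i • a i, (0:V)) : g × V)
      = ∑ i, c i • ((a i, (0:V)) : g × V) := by
    intro c
    refine Prod.ext ?_ ?_ <;> simp [Prod.fst_sum, Prod.snd_sum]
  have hpairR : ∀ (c : Fin r → F), (((0:g), ∑ i, c i • v i) : g × V)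
      = ∑ i, c i • (((0:g), v i) : g × V) := by
    intro c
    refine Prod.ext ?_ ?_ <;> simp [Prod.fst_sum, Prod.snd_sum]
  -- basic vanishing
  have hT0 : ∀ (zz : g) (u : V), BG (T zz, (0:V)) ((0:g), u) = 0 := by
    intro zz u
    rw [hBGsymm]; exact hBG2 0 (Submodule.zero_mem 𝔞) u zz
  have h0T : ∀ (s : V) (zz : g), BG ((0:g), s) (T zz, (0:V)) = 0 := by
    intro s zz; exact hBG2 0 (Submodule.zero_mem 𝔞) s zz
  -- pairing of a-part with V-part
  have hav : ∀ (c : Fin r → F) (u : V),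
      BG (∑ i, c i • a i, (0:V)) ((0:g), u) = ∑ i, c i * v.repr u i := by
    intro c u
    conv_lhs => rw [← Module.Basis.sum_repr v u, hpairL, hpairR]
    rw [map_sum]
    simp only [LinearMap.sum_apply, map_smul, LinearMap.smul_apply, map_sum,
      LinearMap.map_smul, smul_eq_mul, hBG5]
    have hinner : ∀ x : Fin r, ∑ x1, c x1 * (if x1 = x then (1:F) else 0) = c x := by
      intro x
      simp [mul_ite, mul_one, mul_zero, Finset.sum_ite_eq', Finset.mem_univ]
    simp [hinner, mul_comm]
  -- key scalar product formula
  have key : ∀ (x y : g) (u : V), BG (k x) (y, u) = B x y := by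
    intro x y u
    obtain ⟨c, z, rfl⟩ := hsplit y
    rw [hk]
    have hx : ((T x, ∑ i, B (a i) x • v i) : g × V)
        = (T x, (0:V)) + ((0:g), ∑ i, B (a i) x • v i) := by simp
    have hy2 : (((∑ i, c i • a i) + T z, u) : g × V)
        = (∑ i, c i • a i, (0:V)) + (T z, (0:V)) + ((0:g), u) := by simp
    rw [hx, hy2]
    simp only [map_add, LinearMap.add_apply]
    have e1 : BG (T x, (0:V)) (∑ i, c i • a i, (0:V)) = 0 := by
      rw [hBGsymm]
      exact hBG2 _ (Submodule.sum_mem _ fun i _ => Submodule.smul_mem _ _ (ha𝔞 i)) _ x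
    have e2 : BG (T x, (0:V)) (T z, (0:V)) = B x (T z) := by rw [hBG1, hTsa]
    have e3 : BG (T x, (0:V)) ((0:g), u) = 0 := hT0 x u
    have e4 : BG ((0:g), ∑ i, B (a i) x • v i) (∑ i, c i • a i, (0:V))
        = ∑ i, c i * B (a i) x := by
      rw [hBGsymm, hav]
      congr 1; ext i
      rw [v.repr_sum_self]
    have e5 : BG ((0:g), ∑ i, B (a i) x • v i) (T z, (0:V)) = 0 := h0T _ z
    have e6 : BG ((0:g), ∑ i, B (a i) x • v i) ((0:g), u) = 0 := hBG4 _ u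
    rw [e1, e2, e3, e4, e5, e6, map_sum]
    simp only [map_smul, smul_eq_mul]
    have hsy : ∀ i, B x (a i) = B (a i) x := fun i => hBsymm x (a i)
    simp only [hsy]
    ring
  -- characterization of V-perp
  have hperp : ∀ (p : g × V), (∀ u : V, BG p ((0:g), u) = 0) ↔ p.1 ∈ LinearMap.range T := by
    rintro ⟨x, s⟩
    obtain ⟨c, z, hxz⟩ := hsplit x
    have hdec : ((x, s) : g × V) = (∑ i, c i • a i, (0:V)) + (T z, (0:V)) + ((0:g), s) := by
      rw [hxz]; simp
    constructor
    · intro h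
      have hc : ∀ j, c j = 0 := by
        intro j
        have hj := h (v j)
        rw [hdec] at hj
        simp only [map_add, LinearMap.add_apply] at hj
        rw [hav, hT0, hBG4] at hj
        simp only [add_zero] at hj
        rw [← hj]
        rw [Finset.sum_eq_single j]
        · simp
        · intro b _ hb
          simp only [Module.Basis.repr_self, Finsupp.single_apply]
          rw [if_neg (fun h => hb h.symm)]
          ring
        · simp
      refine ⟨z, ?_⟩
      show T z = x
      rw [hxz]
      simp [hc]
    · rintro ⟨z', hz'⟩ u
      have hx' : x = T z' := by exact hz'.symm
      subst hx'
      have hd : ((T z', s) : g × V) = (T z', (0:V)) + ((0:g), s) := by simp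
      rw [hd, map_add, LinearMap.add_apply, hT0, hBG4, add_zero]
  -- surjectivity of the pairing map on ker T
  have hsurjφ : ∀ (t : Fin r → F), ∃ n : g, T n = 0 ∧ ∀ i, B (a i) n = t i := by
    set φ : (LinearMap.ker T) →ₗ[F] (Fin r → F) :=
      LinearMap.pi (fun i => (B (a i)).comp (Submodule.subtype _)) with hφ
    have hinj : Function.Injective φ := by
      rw [← LinearMap.ker_eq_bot]
      rw [Submodule.eq_bot_iff]
      rintro ⟨n, hn⟩ hn0
      have hzero : ∀ i, B (a i) n = 0 := by
        intro i
        have := congrFun hn0 i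
        simpa [hφ] using this
      have : n = 0 := by
        apply hBnondeg
        intro y
        obtain ⟨c, z, rfl⟩ := hsplit y
        rw [hBsymm]
        rw [map_add, map_sum]
        simp only [map_smul, smul_eq_mul]
        have h1 : ∀ i, B (a i) n = 0 := hzero
        have h2 : B (T z) n = 0 := by
          rw [hTsa]
          rw [LinearMap.mem_ker] at hn
          rw [hn, map_zero]
        simp only [LinearMap.add_apply, LinearMap.sum_apply, LinearMap.smul_apply,
          LinearMap.coe_sum, Finset.sum_apply]
        rw [h2]
        simp only [h1, mul_zero, Finset.sum_const_zero, add_zero, smul_eq_mul]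
      simpa using this
    have hfd : Module.finrank F (LinearMap.ker T) = Module.finrank F (Fin r → F) := by
      rw [hkerT]; simp
    have hsurj : Function.Surjective φ :=
      (LinearMap.injective_iff_surjective_of_finrank_eq_finrank hfd).mp hinj
    intro t
    obtain ⟨⟨n, hn⟩, hnt⟩ := hsurj t
    refine ⟨n, hn, fun i => ?_⟩
    have := congrFun hnt i
    simpa [hφ] using this
  refine ⟨fun x y u => (key x y u).symm, ?_, ?_⟩
  · ext p
    simp only [Set.mem_range, Set.mem_setOf_eq]
    constructor
    · rintro ⟨x, rfl⟩
      rw [hperp]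
      rw [hk]
      exact ⟨x, rfl⟩
    · intro hp
      obtain ⟨x, s⟩ := p
      rw [hperp] at hp
      obtain ⟨z, hz⟩ := hp
      obtain ⟨n, hn0, hn⟩ := hsurjφ (fun i => v.repr s i - B (a i) z)
      refine ⟨z + n, ?_⟩
      rw [hk]
      refine Prod.ext ?_ ?_
      · simp [map_add, hn0, hz]
      · simp only
        have : ∀ i, B (a i) (z + n) = v.repr s i := by
          intro i
          rw [map_add, hn i]; ring
        simp only [this]
        exact Module.Basis.sum_repr v s
  · ext p
    simp only [Set.mem_setOf_eq]
    exact hperp p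
end

section
/- In the central-extension setup (see context), define μ_G : G × G → G by μ_G(x+u, y+v) := μ(x,y) and L : G → G by L(x+u) := k(x) for x, y ∈ g, u, v ∈ V. Then (G, μ_G, L) is a Hom-Lie algebra; L is B_G-self-adjoint with B_G(L(x+u), y+v) = B_G(x+u, L(y+v)) = B(x, y) for all x, y ∈ g and u, v ∈ V; and the projection π : G → g, π(x+u) = x, is an epimorphism of Hom-Lie algebras from (G, μ_G, L) onto (g, μ, T), i.e. π(μ_G(a,b)) = μ(π(a), π(b)) and π ∘ L = T ∘ π. Moreover μ_G(G, V) = 0 and L(V) = 0, so (G, μ_G, L) is a central extension of (g, μ, T) by V as Hom-Lie algebras. -/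
/-- In the central-extension setup, with `μ_G(x+u, y+v) := μ(x,y)` and
`L(x+u) := k(x)`, the triple `(G, μ_G, L)` is a Hom-Lie algebra, `L` is
`B_G`-self-adjoint with `B_G(L(x+u), y+v) = B_G(x+u, L(y+v)) = B(x,y)`, the
projection `π : G → g` is an epimorphism of Hom-Lie algebras onto `(g, μ, T)`,
and `μ_G(G, V) = 0`, `L(V) = 0`: `(G, μ_G, L)` is a central extension of
`(g, μ, T)` by `V` as Hom-Lie algebras. -/
theorem homLie_structure_on_central_extension
    {F : Type*} [Field F] [CharZero F] [IsAlgClosed F]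
    {g : Type*} [AddCommGroup g] [Module F g] [FiniteDimensional F g]
    {V : Type*} [AddCommGroup V] [Module F V]
    {r : ℕ} (hr : 0 < r)
    (μ : g →ₗ[F] g →ₗ[F] g) (T : g →ₗ[F] g) (B : g →ₗ[F] g →ₗ[F] F)
    (hμskew : ∀ x y : g, μ x y = - μ y x)
    (hjac : ∀ x y z : g, μ (T x) (μ y z) + μ (T y) (μ z x) + μ (T z) (μ x y) = 0)
    (hequiv : ∀ x y : g, T (μ x y) = μ (T x) y)
    (hBsymm : ∀ x y : g, B x y = B y x)
    (hBnondeg : ∀ x : g, (∀ y : g, B x y = 0) → x = 0)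
    (hBinv : ∀ x y z : g, B (μ x y) z = B x (μ y z))
    (hTsa : ∀ x y : g, B (T x) y = B x (T y))
    (hkerT : Module.finrank F (LinearMap.ker T) = r)
    (𝔞 : Submodule F g) (hcompl : IsCompl 𝔞 (LinearMap.range T))
    (a : Fin r → g) (ha𝔞 : ∀ i, a i ∈ 𝔞)
    (haind : LinearIndependent F a)
    (haspan : Submodule.span F (Set.range a) = 𝔞)
    (v : Module.Basis (Fin r) F V)
    (BG : (g × V) →ₗ[F] (g × V) →ₗ[F] F)
    (hBGsymm : ∀ p q : g × V, BG p q = BG q p)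
    (hBG1 : ∀ x y : g, BG (T x, (0 : V)) (T y, (0 : V)) = B (T x) y)
    (hBG2 : ∀ x ∈ 𝔞, ∀ (u : V) (y : g), BG (x, u) (T y, (0 : V)) = 0)
    (hBG3 : ∀ x ∈ 𝔞, ∀ y ∈ 𝔞, BG (x, (0 : V)) (y, (0 : V)) = 0)
    (hBG4 : ∀ u w : V, BG ((0 : g), u) ((0 : g), w) = 0)
    (hBG5 : ∀ i j : Fin r, BG (a i, (0 : V)) ((0 : g), v j) = if i = j then (1 : F) else 0)
    (k : g →ₗ[F] g × V)
    (hk : ∀ x : g, k x = (T x, ∑ i, B (a i) x • v i))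
    (L : (g × V) →ₗ[F] (g × V))
    (hL : ∀ p : g × V, L p = k p.1)
    (μG : g × V → g × V → g × V)
    (hμG : ∀ p q : g × V, μG p q = ((μ p.1 q.1 : g), (0 : V))) :
    (∀ p q : g × V, μG p q = - μG q p) ∧
    (∀ p q s : g × V, μG (L p) (μG q s) + μG (L q) (μG s p) + μG (L s) (μG p q) = 0) ∧
    (∀ p q : g × V, BG (L p) q = BG p (L q)) ∧
    (∀ p q : g × V, BG (L p) q = B p.1 q.1) ∧
    (∀ p q : g × V, (μG p q).1 = μ p.1 q.1) ∧
    (∀ p : g × V, (L p).1 = T p.1) ∧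
    (∀ (p : g × V) (u : V), μG p ((0 : g), u) = 0) ∧
    (∀ u : V, L ((0 : g), u) = 0) := by
  have key : ∀ (x y : g) (u : V), BG (k x) (y, u) = B x y := by
    intro x y u
    have hy : y ∈ 𝔞 ⊔ LinearMap.range T := by rw [hcompl.sup_eq_top]; trivial
    obtain ⟨s, hs, t, ht, hsum⟩ := Submodule.mem_sup.mp hy
    obtain ⟨z, rfl⟩ := ht
    rw [← haspan, Submodule.mem_span_range_iff_exists_fun] at hs
    obtain ⟨c, rfl⟩ := hs
    subst hsum
    have hky : k x = (T x, (0 : V)) + ∑ i, B (a i) x • (((0 : g), v i) : g × V) := by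
      rw [hk]
      refine Prod.ext ?_ ?_ <;> simp [Prod.fst_sum, Prod.snd_sum]
    have hyu : ((∑ i, c i • a i + T z, u) : g × V)
        = (∑ i, c i • ((a i, (0 : V)) : g × V)) + (T z, (0 : V)) + (((0 : g), u) : g × V) := by
      refine Prod.ext ?_ ?_ <;> simp [Prod.fst_sum, Prod.snd_sum]
    have h2a : ∀ j, BG (T x, (0 : V)) (a j, (0 : V)) = 0 := fun j => by
      rw [hBGsymm]; exact hBG2 (a j) (ha𝔞 j) 0 x
    have h2b : BG (T x, (0 : V)) (((0 : g), u) : g × V) = 0 := by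
      rw [hBGsymm]; exact hBG2 0 (zero_mem _) u x
    have h2c : ∀ i, BG (((0 : g), v i) : g × V) (T z, (0 : V)) = 0 := fun i =>
      hBG2 0 (zero_mem _) (v i) z
    have h2d : ∀ i j, BG (((0 : g), v i) : g × V) (a j, (0 : V)) = if j = i then 1 else 0 :=
      fun i j => by rw [hBGsymm]; exact hBG5 j i
    rw [hky, hyu]
    simp only [map_add, LinearMap.add_apply, map_sum, LinearMap.sum_apply, map_smul,
      LinearMap.smul_apply, smul_eq_mul, h2a, h2b, h2c, h2d, hBG1, hBG4, mul_zero, zero_mul,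
      mul_ite, mul_one, add_zero, zero_add, Finset.sum_const_zero, Finset.sum_ite_eq',
      Finset.mem_univ, if_true]
    simp only [map_add, map_sum, map_smul, smul_eq_mul, ← hTsa]
    have : ∀ j, B x (a j) = B (a j) x := fun j => hBsymm x (a j)
    simp only [this]
    simp only [Finset.sum_ite_eq, Finset.mem_univ, if_true]
  have hL1 : ∀ p : g × V, (L p).1 = T p.1 := fun p => by rw [hL, hk]
  refine ⟨?_, ?_, ?_, ?_, ?_, ?_, ?_, ?_⟩
  · intro p q
    rw [hμG, hμG, hμskew p.1 q.1, Prod.neg_mk, neg_zero]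
  · intro p q s
    simp only [hμG, hL1]
    refine Prod.ext ?_ ?_ <;> simp [hjac]
  · intro p q
    calc BG (L p) q = B p.1 q.1 := by rw [hL]; exact key p.1 q.1 q.2
    _ = B q.1 p.1 := hBsymm _ _
    _ = BG (L q) p := by rw [hL]; exact (key q.1 p.1 p.2).symm
    _ = BG p (L q) := hBGsymm _ _
  · intro p q
    rw [hL]; exact key p.1 q.1 q.2
  · intro p q
    rw [hμG]
  · exact hL1
  · intro p u
    rw [hμG]; simp
  · intro u
    rw [hL]; simp
end

section
/- In the central-extension setup (see context), with L(x+u) := k(x), the kernel of L equals V and the image of L equals the B_G-orthogonal complement V^⊥ of V in G. -/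
/-- In the central-extension setup, with `L(x+u) := k(x)`, one has `Ker(L) = V`
and `Im(L) = V^⊥` (the `B_G`-orthogonal complement of `V` in `G`). -/
theorem ker_and_range_of_L
    {F : Type*} [Field F] [CharZero F] [IsAlgClosed F]
    {g : Type*} [AddCommGroup g] [Module F g] [FiniteDimensional F g]
    {V : Type*} [AddCommGroup V] [Module F V]
    {r : ℕ} (hr : 0 < r)
    (μ : g →ₗ[F] g →ₗ[F] g) (T : g →ₗ[F] g) (B : g →ₗ[F] g →ₗ[F] F)
    (hμskew : ∀ x y : g, μ x y = - μ y x)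
    (hjac : ∀ x y z : g, μ (T x) (μ y z) + μ (T y) (μ z x) + μ (T z) (μ x y) = 0)
    (hequiv : ∀ x y : g, T (μ x y) = μ (T x) y)
    (hBsymm : ∀ x y : g, B x y = B y x)
    (hBnondeg : ∀ x : g, (∀ y : g, B x y = 0) → x = 0)
    (hBinv : ∀ x y z : g, B (μ x y) z = B x (μ y z))
    (hTsa : ∀ x y : g, B (T x) y = B x (T y))
    (hkerT : Module.finrank F (LinearMap.ker T) = r)
    (𝔞 : Submodule F g) (hcompl : IsCompl 𝔞 (LinearMap.range T))
    (a : Fin r → g) (ha𝔞 : ∀ i, a i ∈ 𝔞)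
    (haind : LinearIndependent F a)
    (haspan : Submodule.span F (Set.range a) = 𝔞)
    (v : Module.Basis (Fin r) F V)
    (BG : (g × V) →ₗ[F] (g × V) →ₗ[F] F)
    (hBGsymm : ∀ p q : g × V, BG p q = BG q p)
    (hBG1 : ∀ x y : g, BG (T x, (0 : V)) (T y, (0 : V)) = B (T x) y)
    (hBG2 : ∀ x ∈ 𝔞, ∀ (u : V) (y : g), BG (x, u) (T y, (0 : V)) = 0)
    (hBG3 : ∀ x ∈ 𝔞, ∀ y ∈ 𝔞, BG (x, (0 : V)) (y, (0 : V)) = 0)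
    (hBG4 : ∀ u w : V, BG ((0 : g), u) ((0 : g), w) = 0)
    (hBG5 : ∀ i j : Fin r, BG (a i, (0 : V)) ((0 : g), v j) = if i = j then (1 : F) else 0)
    (k : g →ₗ[F] g × V)
    (hk : ∀ x : g, k x = (T x, ∑ i, B (a i) x • v i))
    (L : (g × V) →ₗ[F] (g × V))
    (hL : ∀ p : g × V, L p = k p.1) :
    ((LinearMap.ker L : Set (g × V)) = {p : g × V | p.1 = 0}) ∧
    (Set.range L = {w : g × V | ∀ u : V, BG w ((0 : g), u) = 0}) := by
  classical
  -- key nondegeneracy lemma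
  have key : ∀ x : g, T x = 0 → (∀ i, B (a i) x = 0) → x = 0 := by
    intro x hTx hBx
    apply hBnondeg
    intro y
    have hy : y ∈ 𝔞 ⊔ LinearMap.range T := by
      rw [hcompl.codisjoint.eq_top]; trivial
    obtain ⟨b, hb, t, ht, rfl⟩ := Submodule.mem_sup.mp hy
    obtain ⟨z, rfl⟩ := ht
    have hb0 : B x b = 0 := by
      rw [← haspan] at hb
      obtain ⟨c, rfl⟩ := (Submodule.mem_span_range_iff_exists_fun F).mp hb
      rw [map_sum]
      refine Finset.sum_eq_zero ?_
      intro i _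
      rw [map_smul]
      have : B x (a i) = 0 := by rw [hBsymm]; exact hBx i
      simp [this]
    have ht0 : B x (T z) = 0 := by
      rw [← hTsa, hTx]
      simp
    rw [map_add, hb0, ht0, add_zero]
  -- kernel
  have hker : ((LinearMap.ker L : Set (g × V)) = {p : g × V | p.1 = 0}) := by
    ext p
    simp only [SetLike.mem_coe, LinearMap.mem_ker, Set.mem_setOf_eq]
    rw [hL, hk]
    constructor
    · intro h
      have h1 : T p.1 = 0 := congrArg Prod.fst h
      have h2 : (∑ i, B (a i) p.1 • v i) = 0 := congrArg Prod.snd h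
      have h3 := Fintype.linearIndependent_iff.mp v.linearIndependent _ h2
      exact key p.1 h1 h3
    · intro h; rw [h]; simp
  refine ⟨hker, ?_⟩
  -- orthogonality facts
  have fact1 : ∀ (x : g) (u : V), BG (T x, (0 : V)) ((0 : g), u) = 0 := by
    intro x u
    rw [hBGsymm]
    exact hBG2 0 𝔞.zero_mem u x
  ext w
  simp only [Set.mem_range, Set.mem_setOf_eq]
  constructor
  · rintro ⟨p, rfl⟩
    intro u
    rw [hL, hk]
    have hsplit : ((T p.1, ∑ i, B (a i) p.1 • v i) : g × V)
        = (T p.1, (0 : V)) + ((0 : g), ∑ i, B (a i) p.1 • v i) := by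
      simp
    rw [hsplit, map_add, LinearMap.add_apply, fact1, hBG4, add_zero]
  · obtain ⟨y, u⟩ := w
    intro hw
    have hy : y ∈ 𝔞 ⊔ LinearMap.range T := by
      rw [hcompl.codisjoint.eq_top]; trivial
    obtain ⟨b, hb, t, ht, hsum⟩ := Submodule.mem_sup.mp hy
    obtain ⟨z, rfl⟩ := ht
    rw [← haspan] at hb
    obtain ⟨c, hc⟩ := (Submodule.mem_span_range_iff_exists_fun F).mp hb
    -- each coefficient vanishes
    have hc0 : ∀ j, c j = 0 := by
      intro j
      have h0 := hw (v j)
      have hdecomp : ((y, u) : g × V)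
          = (b, (0 : V)) + (T z, (0 : V)) + ((0 : g), u) := by
        rw [← hsum]
        simp [Prod.ext_iff]
      rw [hdecomp, map_add, map_add, LinearMap.add_apply, LinearMap.add_apply,
        fact1, hBG4, add_zero, add_zero] at h0
      rw [← hc] at h0
      have hsb : ((∑ i, c i • a i : g), (0 : V))
          = ∑ i, c i • ((a i, (0 : V)) : g × V) := by
        rw [Prod.ext_iff]
        simp [Prod.fst_sum, Prod.snd_sum]
      rw [hsb, map_sum, LinearMap.sum_apply] at h0
      have : (∑ i, c i * (if i = j then (1 : F) else 0)) = 0 := by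
        refine Eq.trans ?_ h0
        refine Finset.sum_congr rfl ?_
        intro i _
        rw [map_smul, LinearMap.smul_apply, hBG5, smul_eq_mul]
      simpa [mul_ite] using this
    have hb0 : b = 0 := by
      rw [← hc]
      simp [hc0]
    have hyz : y = T z := by rw [← hsum, hb0, zero_add]
    -- surjectivity on the kernel
    let Φ : g →ₗ[F] (Fin r → F) := LinearMap.pi (fun i => B (a i))
    let Ψ : (LinearMap.ker T) →ₗ[F] (Fin r → F) := Φ ∘ₗ (LinearMap.ker T).subtype
    have hinj : Function.Injective Ψ := by
      rw [← LinearMap.ker_eq_bot]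
      rw [LinearMap.ker_eq_bot']
      intro n hn
      have hn1 : T (n : g) = 0 := n.2
      have hn2 : ∀ i, B (a i) (n : g) = 0 := fun i => congrFun hn i
      exact Subtype.ext (key _ hn1 hn2)
    have hsurj : Function.Surjective Ψ := by
      have hrk : Module.finrank F (LinearMap.range Ψ) = Module.finrank F (Fin r → F) := by
        rw [LinearMap.finrank_range_of_inj hinj, hkerT, Module.finrank_pi, Fintype.card_fin]
      have := Submodule.eq_top_of_finrank_eq hrk
      exact LinearMap.range_eq_top.mp this
    obtain ⟨n, hn⟩ := hsurj (fun i => v.repr u i - B (a i) z)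
    refine ⟨(z + (n : g), 0), ?_⟩
    rw [hL, hk]
    have hTn : T (n : g) = 0 := n.2
    have hcoord : ∀ i, B (a i) (z + (n : g)) = v.repr u i := by
      intro i
      have := congrFun hn i
      simp only [Ψ, Φ, LinearMap.comp_apply, LinearMap.pi_apply, Submodule.subtype_apply] at this
      rw [map_add, this]
      ring
    rw [Prod.ext_iff]
    constructor
    · simp only [map_add, hTn, add_zero]
      exact hyz.symm
    · show (∑ i, B (a i) (z + (n : g)) • v i) = u
      calc (∑ i, B (a i) (z + (n : g)) • v i) = ∑ i, v.repr u i • v i := by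
            refine Finset.sum_congr rfl fun i _ => by rw [hcoord i]
        _ = u := v.sum_repr u
end

section
/- In the central-extension setup (see context), if the bilinear form B_G is invariant under the Hom-Lie product μ_G, i.e. B_G(μ_G(a,b), c) = B_G(a, μ_G(b,c)) for all a, b, c ∈ G, then the 2-cocycle θ(x,y) := Σᵢ B(μ(aᵢ, x), y) vᵢ is identically zero. -/
/-- In the central-extension setup, if `B_G` is invariant under the Hom-Lie
product `μ_G` (with `μ_G(x+u, y+v) = μ(x,y)`), then the 2-cocycle
`θ(x,y) = Σᵢ B(μ(aᵢ,x), y) vᵢ` vanishes identically. -/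
theorem BG_muG_invariant_implies_cocycle_zero
    {F : Type*} [Field F] [CharZero F] [IsAlgClosed F]
    {g : Type*} [AddCommGroup g] [Module F g] [FiniteDimensional F g]
    {V : Type*} [AddCommGroup V] [Module F V]
    {r : ℕ} (hr : 0 < r)
    (μ : g →ₗ[F] g →ₗ[F] g) (T : g →ₗ[F] g) (B : g →ₗ[F] g →ₗ[F] F)
    (hμskew : ∀ x y : g, μ x y = - μ y x)
    (hjac : ∀ x y z : g, μ (T x) (μ y z) + μ (T y) (μ z x) + μ (T z) (μ x y) = 0)
    (hequiv : ∀ x y : g, T (μ x y) = μ (T x) y)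
    (hBsymm : ∀ x y : g, B x y = B y x)
    (hBnondeg : ∀ x : g, (∀ y : g, B x y = 0) → x = 0)
    (hBinv : ∀ x y z : g, B (μ x y) z = B x (μ y z))
    (hTsa : ∀ x y : g, B (T x) y = B x (T y))
    (hkerT : Module.finrank F (LinearMap.ker T) = r)
    (𝔞 : Submodule F g) (hcompl : IsCompl 𝔞 (LinearMap.range T))
    (a : Fin r → g) (ha𝔞 : ∀ i, a i ∈ 𝔞)
    (haind : LinearIndependent F a)
    (haspan : Submodule.span F (Set.range a) = 𝔞)
    (v : Module.Basis (Fin r) F V)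
    (BG : (g × V) →ₗ[F] (g × V) →ₗ[F] F)
    (hBGsymm : ∀ p q : g × V, BG p q = BG q p)
    (hBG1 : ∀ x y : g, BG (T x, (0 : V)) (T y, (0 : V)) = B (T x) y)
    (hBG2 : ∀ x ∈ 𝔞, ∀ (u : V) (y : g), BG (x, u) (T y, (0 : V)) = 0)
    (hBG3 : ∀ x ∈ 𝔞, ∀ y ∈ 𝔞, BG (x, (0 : V)) (y, (0 : V)) = 0)
    (hBG4 : ∀ u w : V, BG ((0 : g), u) ((0 : g), w) = 0)
    (hBG5 : ∀ i j : Fin r, BG (a i, (0 : V)) ((0 : g), v j) = if i = j then (1 : F) else 0)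
    (k : g →ₗ[F] g × V)
    (hk : ∀ x : g, k x = (T x, ∑ i, B (a i) x • v i))
    (hBGμinv : ∀ p q s : g × V,
      BG ((μ p.1 q.1 : g), (0 : V)) s = BG p ((μ q.1 s.1 : g), (0 : V))) :
    ∀ x y : g, ∑ i, B (μ (a i) x) y • v i = 0 := by

  -- Step 1: every μ x y lies in the range of T.
  have step1 : ∀ x y : g, μ x y ∈ LinearMap.range T := by
    intro x y
    have hmem : μ x y ∈ 𝔞 ⊔ LinearMap.range T := by
      rw [hcompl.sup_eq_top]; trivial
    obtain ⟨p, hp, q, hq, hpq⟩ := Submodule.mem_sup.mp hmem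
    obtain ⟨z, hz⟩ := hq
    rw [← haspan] at hp
    obtain ⟨c, hc⟩ := (Submodule.mem_span_range_iff_exists_fun F).mp hp
    have key : ∀ j : Fin r, c j = 0 := by
      intro j
      have h0 := hBGμinv ((0 : g), v j) (x, (0 : V)) (y, (0 : V))
      simp only [map_zero, LinearMap.zero_apply] at h0
      have hz0 : BG ((0 : g), v j) (μ x y, (0 : V)) = 0 := by
        rw [← h0]
        have h00 : (((0 : g), (0 : V)) : g × V) = 0 := rfl
        rw [h00, map_zero, LinearMap.zero_apply]
      rw [← hpq, ← hc, ← hz] at hz0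
      have hsplit : ((∑ i, c i • a i + T z : g), (0 : V))
          = (∑ i, c i • ((a i, (0 : V)) : g × V)) + ((T z : g), (0 : V)) := by
        ext
        · simp [Prod.fst_sum]
        · simp [Prod.snd_sum]
      rw [hsplit, map_add, map_sum] at hz0
      have h2 : BG ((0 : g), v j) ((T z : g), (0 : V)) = 0 :=
        hBG2 0 (Submodule.zero_mem 𝔞) (v j) z
      have h5 : ∀ i : Fin r, BG ((0 : g), v j) (c i • ((a i, (0 : V)) : g × V))
          = c i * (if i = j then (1 : F) else 0) := by
        intro i
        rw [map_smul, smul_eq_mul, hBGsymm, hBG5]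
      simp only [h5, h2, add_zero] at hz0
      simp only [mul_ite, mul_one, mul_zero, Finset.sum_ite_eq',
        Finset.mem_univ, if_true] at hz0
      exact hz0
    have : p = 0 := by
      rw [← hc]
      simp [key]
    rw [← hpq, this, zero_add]
    exact ⟨z, hz⟩
  -- Step 2: μ (a i) x = 0 for all i, x.
  have step2 : ∀ (i : Fin r) (x : g), μ (a i) x = 0 := by
    intro i x
    obtain ⟨z, hz⟩ := step1 (a i) x
    apply hBnondeg
    intro w
    have h0 := hBGμinv (a i, (0 : V)) (x, (0 : V)) ((T w : g), (0 : V))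
    obtain ⟨z', hz'⟩ := step1 x (T w)
    have hr1 : BG ((a i, (0 : V)) : g × V) ((μ x (T w) : g), (0 : V)) = 0 := by
      rw [← hz']
      exact hBG2 (a i) (ha𝔞 i) 0 z'
    rw [hr1] at h0
    have hl : BG (((μ (a i) x : g), (0 : V)) : g × V) ((T w : g), (0 : V))
        = B (μ (a i) x) w := by
      rw [← hz, hBG1, hz]
    rw [hl] at h0
    exact h0
  intro x y
  simp [step2]
end

section
/- Let (g, [·,·], B) be a quadratic Lie algebra over a field of characteristic zero, V a vector space with basis v_1, …, v_r, and D_1, …, D_r derivations of g anti-self-adjoint with respect to B. Equip G := g ⊕ V with the Lie bracket [x+u, y+v]_G := [x,y] + Σᵢ B(Dᵢ(x), y) vᵢ. Then the center of (G, [·,·]_G) equals (C(g) ∩ ⋂_{i=1}^r Ker(Dᵢ)) ⊕ V, where C(g) is the center of (g, [·,·]). In particular, if ⋂_{i=1}^r Ker(Dᵢ) = {0}, then C(G) = V. -/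
/-- For the central extension `G = g ⊕ V` of a quadratic Lie algebra `(g, [·,·], B)`
defined by `B`-anti-self-adjoint derivations `D₁,…,D_r`, the center of
`(G, [·,·]_G)` equals `(C(g) ∩ ⋂ᵢ Ker Dᵢ) ⊕ V`; in particular if
`⋂ᵢ Ker Dᵢ = 0` then the center equals `V`. -/
theorem center_of_central_extension_by_derivations
    {F : Type*} [Field F] [CharZero F]
    {g : Type*} [LieRing g] [LieAlgebra F g] [Module.Finite F g]
    {V : Type*} [AddCommGroup V] [Module F V]
    {r : ℕ}
    (B : g →ₗ[F] g →ₗ[F] F)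
    (hBsymm : ∀ x y : g, B x y = B y x)
    (hBnondeg : ∀ x : g, (∀ y : g, B x y = 0) → x = 0)
    (hBinv : ∀ x y z : g, B ⁅x, y⁆ z = B x ⁅y, z⁆)
    (v : Module.Basis (Fin r) F V)
    (D : Fin r → (g →ₗ[F] g))
    (hder : ∀ (i : Fin r) (x y : g), D i ⁅x, y⁆ = ⁅D i x, y⁆ + ⁅x, D i y⁆)
    (hanti : ∀ (i : Fin r) (x y : g), B (D i x) y = - B x (D i y))
    (brG : g × V → g × V → g × V)
    (hbrG : ∀ p q : g × V,
      brG p q = (⁅p.1, q.1⁆, ∑ i, B (D i p.1) q.1 • v i)) :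
    ({p : g × V | ∀ q : g × V, brG p q = 0}
        = {p : g × V | (∀ y : g, ⁅p.1, y⁆ = 0) ∧ ∀ i : Fin r, D i p.1 = 0}) ∧
    ((⨅ i : Fin r, LinearMap.ker (D i)) = ⊥ →
      {p : g × V | ∀ q : g × V, brG p q = 0} = {p : g × V | p.1 = 0}) := by
  have key : {p : g × V | ∀ q : g × V, brG p q = 0}
      = {p : g × V | (∀ y : g, ⁅p.1, y⁆ = 0) ∧ ∀ i : Fin r, D i p.1 = 0} := by
    ext p
    simp only [Set.mem_setOf_eq]
    constructor
    · intro h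
      have h' : ∀ y : g, (⁅p.1, y⁆, ∑ i, B (D i p.1) y • v i) = (0 : g × V) := by
        intro y
        have := h (y, 0)
        rwa [hbrG] at this
      have h1 : ∀ y : g, ⁅p.1, y⁆ = 0 := fun y => congrArg Prod.fst (h' y)
      have h2 : ∀ (i : Fin r) (y : g), B (D i p.1) y = 0 := by
        intro i y
        have hs : ∑ j, B (D j p.1) y • v j = 0 := congrArg Prod.snd (h' y)
        exact Fintype.linearIndependent_iff.mp v.linearIndependent
          (fun j => B (D j p.1) y) hs i
      exact ⟨h1, fun i => hBnondeg _ (h2 i)⟩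
    · rintro ⟨h1, h2⟩ q
      rw [hbrG, h1 q.1]
      have : ∀ i : Fin r, B (D i p.1) q.1 • v i = 0 := by
        intro i; rw [h2 i]; simp
      simp [this]
  refine ⟨key, fun hker => ?_⟩
  rw [key]
  ext p
  simp only [Set.mem_setOf_eq]
  constructor
  · rintro ⟨h1, h2⟩
    have : p.1 ∈ ⨅ i : Fin r, LinearMap.ker (D i) := by
      simp only [Submodule.mem_iInf, LinearMap.mem_ker]; exact h2
    rw [hker] at this
    exact this
  · intro h
    rw [h]
    exact ⟨fun y => zero_lie y, fun i => map_zero _⟩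
end

section
/- Let (𝔥, ν, S) be a Hom-Lie algebra over a field F of characteristic zero with ν-equivariant S. Let ν* : 𝔥 → gl(𝔥*) be defined by (ν*(x)(α))(y) := −α(ν(x,y)). On g := 𝔥 ⊕ 𝔥* define μ(x+α, y+β) := ν(x,y) + ν*(x)(β) − ν*(y)(α), T(x+α) := S(x) + S*(α) (S* the dual map of S), and B(x+α, y+β) := α(y) + β(x). Then (g, μ, T, B) is a quadratic Hom-Lie algebra with μ-equivariant T. -/
/-!
All identities on `𝔥 ⊕ 𝔥*` reduce, componentwise, to identities in `𝔥`. The `𝔥`-components are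
the hypotheses themselves. The `𝔥*`-components of the Hom-Jacobi identity and of equivariance
say that the coadjoint map `ν*` is a representation twisted by `S`; by skew-symmetry and
equivariance `S` can be moved freely between the arguments of `ν`, and then this becomes the
Hom-Jacobi identity of `𝔥` rewritten as `S (ν (ν y z) w) = ν y (ν (S z) w) - ν z (ν (S y) w)`.
The pairing is invariant by skew-symmetry of `ν`, and nondegenerate because `𝔥*` separates
the points of `𝔥`.
-/

namespace HomLie

section Bracket

variable {R H : Type*} [CommRing R] [AddCommGroup H] [Module R H]
  {ν : H →ₗ[R] H →ₗ[R] H} {S : H →ₗ[R] H}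

theorem bracket_map_right (hskew : ∀ x y, ν x y = -ν y x) (hequiv : ∀ x y, S (ν x y) = ν (S x) y)
    (x y : H) : ν x (S y) = ν (S x) y := by
  rw [hskew x (S y), ← hequiv, hskew y x, map_neg, neg_neg, hequiv]

theorem bracket_bracket_map (hskew : ∀ x y, ν x y = -ν y x)
    (hequiv : ∀ x y, S (ν x y) = ν (S x) y) (x y z : H) :
    ν x (ν (S y) z) = ν (S x) (ν y z) := by
  rw [← hequiv y z, bracket_map_right hskew hequiv]

theorem map_bracket_bracket (hskew : ∀ x y, ν x y = -ν y x)
    (hjac : ∀ x y z, ν (S x) (ν y z) + ν (S y) (ν z x) + ν (S z) (ν x y) = 0)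
    (hequiv : ∀ x y, S (ν x y) = ν (S x) y) (x y z : H) :
    S (ν (ν x y) z) = ν x (ν (S y) z) - ν y (ν (S x) z) := by
  have hjac' := hjac x y z
  rw [hskew z x, map_neg, ← bracket_map_right hskew hequiv z, hskew z] at hjac'
  rw [hequiv, bracket_bracket_map hskew hequiv, bracket_bracket_map hskew hequiv,
    ← sub_eq_zero, ← neg_eq_zero, ← hjac']
  abel

end Bracket

section Cotangent

variable {R H : Type*} [CommRing R] [AddCommGroup H] [Module R H]

/-- The bracket `ν(x,y) + ν*(x)(β) − ν*(y)(α)` on `𝔥 ⊕ 𝔥*`, where `ν*(x)(β) = -β ∘ ν x`. -/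
def cotangentBracket (ν : H →ₗ[R] H →ₗ[R] H) (p q : H × Module.Dual R H) :
    H × Module.Dual R H :=
  (ν p.1 q.1, -(q.2.comp (ν p.1)) + p.2.comp (ν q.1))

def cotangentTwist (S : H →ₗ[R] H) (p : H × Module.Dual R H) : H × Module.Dual R H :=
  (S p.1, p.2.comp S)

def cotangentPairing (p q : H × Module.Dual R H) : R :=
  p.2 q.1 + q.2 p.1

variable {ν : H →ₗ[R] H →ₗ[R] H} {S : H →ₗ[R] H}

theorem cotangentBracket_skew (hskew : ∀ x y, ν x y = -ν y x) (p q : H × Module.Dual R H) :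
    cotangentBracket ν p q = -cotangentBracket ν q p := by
  refine Prod.ext (hskew p.1 q.1) ?_
  simp only [cotangentBracket, Prod.snd_neg]
  abel

theorem cotangentBracket_hom_jacobi (hskew : ∀ x y, ν x y = -ν y x)
    (hjac : ∀ x y z, ν (S x) (ν y z) + ν (S y) (ν z x) + ν (S z) (ν x y) = 0)
    (hequiv : ∀ x y, S (ν x y) = ν (S x) y) (p q s : H × Module.Dual R H) :
    cotangentBracket ν (cotangentTwist S p) (cotangentBracket ν q s) +
      cotangentBracket ν (cotangentTwist S q) (cotangentBracket ν s p) +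
      cotangentBracket ν (cotangentTwist S s) (cotangentBracket ν p q) = 0 := by
  refine Prod.ext (hjac p.1 q.1 s.1) (LinearMap.ext fun w => ?_)
  simp only [cotangentBracket, cotangentTwist, Prod.snd_add, Prod.snd_zero, LinearMap.add_apply,
    LinearMap.neg_apply, LinearMap.comp_apply, LinearMap.zero_apply, bracket_bracket_map hskew hequiv, map_bracket_bracket hskew hjac hequiv, map_sub]
  ring

theorem cotangentTwist_cotangentBracket (hskew : ∀ x y, ν x y = -ν y x)
    (hequiv : ∀ x y, S (ν x y) = ν (S x) y) (p q : H × Module.Dual R H) :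
    cotangentTwist S (cotangentBracket ν p q) = cotangentBracket ν (cotangentTwist S p) q := by
  refine Prod.ext (hequiv p.1 q.1) (LinearMap.ext fun w => ?_)
  simp only [cotangentBracket, cotangentTwist, LinearMap.add_apply, LinearMap.neg_apply,
    LinearMap.comp_apply, hequiv, bracket_map_right hskew hequiv]

theorem cotangentPairing_comm (p q : H × Module.Dual R H) :
    cotangentPairing p q = cotangentPairing q p :=
  add_comm _ _

theorem eq_zero_of_cotangentPairing_eq_zero [Module.Projective R H] (p : H × Module.Dual R H)
    (hp : ∀ q, cotangentPairing p q = 0) : p = 0 := by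
  obtain ⟨x, α⟩ := p
  have hα : α = 0 := LinearMap.ext fun y => by simpa [cotangentPairing] using hp (y, 0)
  have hx : x = 0 := (Module.forall_dual_apply_eq_zero_iff R x).mp fun β => by
    simpa [cotangentPairing] using hp (0, β)
  rw [hx, hα, Prod.mk_zero_zero]

theorem cotangentPairing_cotangentBracket (hskew : ∀ x y, ν x y = -ν y x)
    (p q s : H × Module.Dual R H) :
    cotangentPairing (cotangentBracket ν p q) s = cotangentPairing p (cotangentBracket ν q s) := by
  simp only [cotangentPairing, cotangentBracket, LinearMap.add_apply, LinearMap.neg_apply,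
    LinearMap.comp_apply, hskew q.1 p.1, hskew s.1 p.1, map_neg]
  ring

theorem cotangentPairing_cotangentTwist (p q : H × Module.Dual R H) :
    cotangentPairing (cotangentTwist S p) q = cotangentPairing p (cotangentTwist S q) := by
  simp only [cotangentPairing, cotangentTwist, LinearMap.comp_apply]

end Cotangent

end HomLie

open HomLie in
theorem double_extension_on_h_oplus_dual_general
    {F : Type*} [Field F]
    {H : Type*} [AddCommGroup H] [Module F H]
    (ν : H →ₗ[F] H →ₗ[F] H) (S : H →ₗ[F] H)
    (hskew : ∀ x y : H, ν x y = - ν y x)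
    (hjac : ∀ x y z : H, ν (S x) (ν y z) + ν (S y) (ν z x) + ν (S z) (ν x y) = 0)
    (hequiv : ∀ x y : H, S (ν x y) = ν (S x) y)
    (μ : (H × Module.Dual F H) → (H × Module.Dual F H) → (H × Module.Dual F H))
    (hμ : ∀ (x y : H) (α β : Module.Dual F H),
      μ (x, α) (y, β) = (ν x y, - (β.comp (ν x)) + α.comp (ν y)))
    (T : (H × Module.Dual F H) → (H × Module.Dual F H))
    (hT : ∀ (x : H) (α : Module.Dual F H), T (x, α) = (S x, α.comp S))
    (B : (H × Module.Dual F H) → (H × Module.Dual F H) → F)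
    (hB : ∀ (x y : H) (α β : Module.Dual F H), B (x, α) (y, β) = α y + β x) :
    (∀ p q : H × Module.Dual F H, μ p q = - μ q p) ∧
    (∀ p q s : H × Module.Dual F H,
      μ (T p) (μ q s) + μ (T q) (μ s p) + μ (T s) (μ p q) = 0) ∧
    (∀ p q : H × Module.Dual F H, T (μ p q) = μ (T p) q) ∧
    (∀ p q : H × Module.Dual F H, B p q = B q p) ∧
    (∀ p : H × Module.Dual F H, (∀ q : H × Module.Dual F H, B p q = 0) → p = 0) ∧
    (∀ p q s : H × Module.Dual F H, B (μ p q) s = B p (μ q s)) ∧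
    (∀ p q : H × Module.Dual F H, B (T p) q = B p (T q)) := by
  obtain rfl : μ = cotangentBracket ν := funext₂ fun ⟨x, α⟩ ⟨y, β⟩ => hμ x y α β
  obtain rfl : T = cotangentTwist S := funext fun ⟨x, α⟩ => hT x α
  obtain rfl : B = cotangentPairing := funext₂ fun ⟨x, α⟩ ⟨y, β⟩ => hB x y α β
  exact ⟨cotangentBracket_skew hskew, cotangentBracket_hom_jacobi hskew hjac hequiv,
    cotangentTwist_cotangentBracket hskew hequiv, cotangentPairing_comm,
    eq_zero_of_cotangentPairing_eq_zero, cotangentPairing_cotangentBracket hskew,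
    cotangentPairing_cotangentTwist⟩

/-- From a Hom-Lie algebra `(𝔥, ν, S)` with `ν`-equivariant `S` one obtains a
quadratic Hom-Lie algebra structure `(g = 𝔥 ⊕ 𝔥*, μ, T, B)` with `μ`-equivariant `T`,
where `μ(x+α, y+β) = ν(x,y) + ν*(x)(β) − ν*(y)(α)`, `T(x+α) = S(x) + S*(α)` and
`B(x+α, y+β) = α(y) + β(x)`. -/
theorem double_extension_on_h_oplus_dual
    {F : Type*} [Field F] [CharZero F]
    {H : Type*} [AddCommGroup H] [Module F H] [FiniteDimensional F H]
    (ν : H →ₗ[F] H →ₗ[F] H) (S : H →ₗ[F] H)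
    (hskew : ∀ x y : H, ν x y = - ν y x)
    (hjac : ∀ x y z : H, ν (S x) (ν y z) + ν (S y) (ν z x) + ν (S z) (ν x y) = 0)
    (hequiv : ∀ x y : H, S (ν x y) = ν (S x) y)
    (μ : (H × Module.Dual F H) → (H × Module.Dual F H) → (H × Module.Dual F H))
    (hμ : ∀ (x y : H) (α β : Module.Dual F H),
      μ (x, α) (y, β) = (ν x y, - (β.comp (ν x)) + α.comp (ν y)))
    (T : (H × Module.Dual F H) → (H × Module.Dual F H))
    (hT : ∀ (x : H) (α : Module.Dual F H), T (x, α) = (S x, α.comp S))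
    (B : (H × Module.Dual F H) → (H × Module.Dual F H) → F)
    (hB : ∀ (x y : H) (α β : Module.Dual F H), B (x, α) (y, β) = α y + β x) :
    (∀ p q : H × Module.Dual F H, μ p q = - μ q p) ∧
    (∀ p q s : H × Module.Dual F H,
      μ (T p) (μ q s) + μ (T q) (μ s p) + μ (T s) (μ p q) = 0) ∧
    (∀ p q : H × Module.Dual F H, T (μ p q) = μ (T p) q) ∧
    (∀ p q : H × Module.Dual F H, B p q = B q p) ∧
    (∀ p : H × Module.Dual F H, (∀ q : H × Module.Dual F H, B p q = 0) → p = 0) ∧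
    (∀ p q s : H × Module.Dual F H, B (μ p q) s = B p (μ q s)) ∧
    (∀ p q : H × Module.Dual F H, B (T p) q = B p (T q)) :=
  double_extension_on_h_oplus_dual_general ν S hskew hjac hequiv μ hμ T hT B hB
end

section
/- In the central-extension setup (see context), define the bilinear product on G by 2·(x·y) := μ_G(x,y) + [x, h(y)]_G − [h(x), y]_G for x, y ∈ G, where h : G → g is the linear map determined by B(h(w), z) = B_G(w, z) for all w ∈ G, z ∈ g. Then: (i) x·y − y·x = μ_G(x,y) for all x, y ∈ G; (ii) 2 B_G(x·y, z) = B_G(μ_G(x,y), z) + B_G(μ_G(z,x), y) + B_G(μ_G(z,y), x) for all x, y, z ∈ G; (iii) x·x = 0 for every x ∈ Ker(h) ∪ Im(L), and G = Ker(h) ⊕ Im(L). -/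
/-- In the central-extension setup, the product on `G = g ⊕ V` defined by
`2(x·y) = μ_G(x,y) + [x, h(y)]_G − [h(x), y]_G` satisfies:
(i) `x·y − y·x = μ_G(x,y)`;
(ii) `2 B_G(x·y, z) = B_G(μ_G(x,y), z) + B_G(μ_G(z,x), y) + B_G(μ_G(z,y), x)`;
(iii) `x·x = 0` for every `x ∈ Ker(h) ∪ Im(L)`, and `G = Ker(h) ⊕ Im(L)`. -/
theorem product_realizing_muG
    {F : Type*} [Field F] [CharZero F] [IsAlgClosed F]
    {g : Type*} [AddCommGroup g] [Module F g] [FiniteDimensional F g]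
    {V : Type*} [AddCommGroup V] [Module F V]
    {r : ℕ} (hr : 0 < r)
    (μ : g →ₗ[F] g →ₗ[F] g) (T : g →ₗ[F] g) (B : g →ₗ[F] g →ₗ[F] F)
    (hμskew : ∀ x y : g, μ x y = - μ y x)
    (hjac : ∀ x y z : g, μ (T x) (μ y z) + μ (T y) (μ z x) + μ (T z) (μ x y) = 0)
    (hequiv : ∀ x y : g, T (μ x y) = μ (T x) y)
    (hBsymm : ∀ x y : g, B x y = B y x)
    (hBnondeg : ∀ x : g, (∀ y : g, B x y = 0) → x = 0)
    (hBinv : ∀ x y z : g, B (μ x y) z = B x (μ y z))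
    (hTsa : ∀ x y : g, B (T x) y = B x (T y))
    (hkerT : Module.finrank F (LinearMap.ker T) = r)
    (𝔞 : Submodule F g) (hcompl : IsCompl 𝔞 (LinearMap.range T))
    (a : Fin r → g) (ha𝔞 : ∀ i, a i ∈ 𝔞)
    (haind : LinearIndependent F a)
    (haspan : Submodule.span F (Set.range a) = 𝔞)
    (v : Module.Basis (Fin r) F V)
    (BG : (g × V) →ₗ[F] (g × V) →ₗ[F] F)
    (hBGsymm : ∀ p q : g × V, BG p q = BG q p)
    (hBG1 : ∀ x y : g, BG (T x, (0 : V)) (T y, (0 : V)) = B (T x) y)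
    (hBG2 : ∀ x ∈ 𝔞, ∀ (u : V) (y : g), BG (x, u) (T y, (0 : V)) = 0)
    (hBG3 : ∀ x ∈ 𝔞, ∀ y ∈ 𝔞, BG (x, (0 : V)) (y, (0 : V)) = 0)
    (hBG4 : ∀ u w : V, BG ((0 : g), u) ((0 : g), w) = 0)
    (hBG5 : ∀ i j : Fin r, BG (a i, (0 : V)) ((0 : g), v j) = if i = j then (1 : F) else 0)
    (k : g →ₗ[F] g × V)
    (hk : ∀ x : g, k x = (T x, ∑ i, B (a i) x • v i))
    (L : (g × V) →ₗ[F] (g × V))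
    (hL : ∀ p : g × V, L p = k p.1)
    (h : (g × V) →ₗ[F] g)
    (hh : ∀ (w : g × V) (z : g), B (h w) z = BG w (z, (0 : V)))
    (mul : g × V → g × V → g × V)
    (hmul : ∀ p q : g × V,
      (2 : F) • mul p q
        = ((μ p.1 q.1 : g), (0 : V)) + k (μ p.1 (h q)) - k (μ (h p) q.1)) :
    (∀ p q : g × V, mul p q - mul q p = ((μ p.1 q.1 : g), (0 : V))) ∧
    (∀ p q s : g × V,
      (2 : F) * BG (mul p q) s
        = BG ((μ p.1 q.1 : g), (0 : V)) s
          + BG ((μ s.1 p.1 : g), (0 : V)) q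
          + BG ((μ s.1 q.1 : g), (0 : V)) p) ∧
    (∀ p : g × V, (h p = 0 ∨ p ∈ Set.range L) → mul p p = 0) ∧
    IsCompl (LinearMap.ker h) (LinearMap.range L) := by
  classical
  have h2ne : (2:F) ≠ 0 := two_ne_zero
  have cancel : ∀ x y : g × V, (2:F) • x = (2:F) • y → x = y :=
    fun x y hxy => smul_right_injective (g × V) h2ne hxy
  have hμ0 : ∀ x : g, μ x x = 0 := by
    intro x
    have h2 : μ x x + μ x x = 0 := add_eq_zero_iff_eq_neg.mpr (hμskew x x)
    have h3 : (2:F) • μ x x = 0 := by rw [two_smul]; exact h2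
    exact (smul_eq_zero.mp h3).resolve_left h2ne
  have hdecomp : ∀ z : g, ∃ (c : Fin r → F) (z' : g), z = (∑ i, c i • a i) + T z' := by
    intro z
    have hz : z ∈ 𝔞 ⊔ LinearMap.range T := by rw [hcompl.sup_eq_top]; trivial
    obtain ⟨y, hy, w, hw, hyw⟩ := Submodule.mem_sup.mp hz
    obtain ⟨z', rfl⟩ := hw
    rw [← haspan] at hy
    obtain ⟨c, hc⟩ := (Submodule.mem_span_range_iff_exists_fun F).mp hy
    exact ⟨c, z', by rw [hc, hyw]⟩
  have hGai : ∀ (w : g) (i : Fin r), BG (T w, (0:V)) (a i, (0:V)) = 0 := fun w i => by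
    rw [hBGsymm]; exact hBG2 (a i) (ha𝔞 i) 0 w
  have hGu : ∀ (w : g) (u : V), BG (T w, (0:V)) ((0:g), u) = 0 := fun w u => by
    rw [hBGsymm]; exact hBG2 0 (Submodule.zero_mem 𝔞) u w
  have hvT : ∀ (u : V) (y : g), BG ((0:g), u) (T y, (0:V)) = 0 :=
    fun u y => hBG2 0 (Submodule.zero_mem 𝔞) u y
  have hva : ∀ i j : Fin r, BG ((0:g), v i) (a j, (0:V)) = if j = i then (1:F) else 0 :=
    fun i j => by rw [hBGsymm]; exact hBG5 j i
  have keyC : ∀ (w : g) (c : Fin r → F) (z' : g) (uu : V),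
      BG (k w) ((∑ i, c i • a i) + T z', uu)
        = B w (T z') + B (∑ i, c i • a i) w := by
    intro w c z' uu
    have e1 : (((∑ i, c i • a i) + T z', uu) : g × V)
        = (∑ i, c i • ((a i, (0:V)) : g × V)) + ((T z', (0:V)) : g × V) + (((0:g), uu) : g × V) := by
      rw [Prod.ext_iff]
      constructor <;> simp [Prod.fst_sum, Prod.snd_sum]
    have e2 : k w = ((T w, (0:V)) : g × V) + ∑ i, B (a i) w • (((0:g), v i) : g × V) := by
      rw [hk w, Prod.ext_iff]
      constructor <;> simp [Prod.fst_sum, Prod.snd_sum]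
    rw [e1, e2]
    simp only [map_add, map_sum, map_smul, LinearMap.add_apply, LinearMap.sum_apply,
      LinearMap.smul_apply, smul_eq_mul, hGai, hGu, hvT, hva, hBG4, hBG1,
      mul_zero, zero_mul, add_zero, zero_add, Finset.sum_const_zero,
      mul_ite, mul_one, Finset.sum_ite_eq', Finset.mem_univ, if_true]
    rw [hTsa w z']
    simp only [Finset.sum_ite_eq, Finset.mem_univ, if_true, map_sum, LinearMap.sum_apply,
      map_smul, LinearMap.smul_apply, smul_eq_mul]
    ring
  have hBk : ∀ (x z : g), B (h (k x)) z = B x z := by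
    intro x z
    obtain ⟨c, z', hz⟩ := hdecomp z
    rw [hh (k x) z, hz, keyC x c z' 0, map_add, hBsymm (∑ i, c i • a i) x]
    ring
  have hhk : ∀ x : g, h (k x) = x := by
    intro x
    have hsub : h (k x) - x = 0 := hBnondeg _ (fun y => by
      rw [map_sub, LinearMap.sub_apply, hBk x y, sub_self])
    exact sub_eq_zero.mp hsub
  have claimB : ∀ (x y : g) (s : g × V), BG (k (μ x y)) s = B y (μ s.1 x) := by
    intro x y s
    obtain ⟨z, u⟩ := s
    simp only []
    obtain ⟨c, z', hz⟩ := hdecomp z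
    subst hz
    rw [keyC]
    have eA : B (∑ i, c i • a i) (μ x y) = B y (μ (∑ i, c i • a i) x) := by
      rw [← hBinv]; exact hBsymm _ _
    have eTT : μ x (T y) = μ (T x) y := by
      rw [hμskew x (T y), ← hequiv y x, hμskew y x, map_neg, neg_neg, hequiv x y]
    have eT : B (μ x y) (T z') = B y (μ (T z') x) := by
      calc B (μ x y) (T z') = B (T (μ x y)) z' := (hTsa (μ x y) z').symm
        _ = B (μ (T x) y) z' := by rw [hequiv]
        _ = B z' (μ (T x) y) := hBsymm _ _
        _ = B z' (μ x (T y)) := by rw [eTT]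
        _ = B (μ z' x) (T y) := (hBinv z' x (T y)).symm
        _ = B (T y) (μ z' x) := hBsymm _ _
        _ = B y (T (μ z' x)) := hTsa y _
        _ = B y (μ (T z') x) := by rw [hequiv]
    rw [eT, eA, map_add, LinearMap.add_apply, map_add]
    ring
  have part1 : ∀ p q : g × V, mul p q - mul q p = ((μ p.1 q.1 : g), (0:V)) := by
    intro p q
    apply cancel
    rw [smul_sub, hmul p q, hmul q p, hμskew q.1 p.1, hμskew q.1 (h p), hμskew (h q) p.1,
      map_neg, map_neg, two_smul]
    have e3 : ((-(μ p.1 q.1) : g), (0:V)) = -(((μ p.1 q.1 : g), (0:V)) : g × V) := by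
      rw [Prod.ext_iff]; constructor <;> simp [Prod.fst_sum, Prod.snd_sum]
    rw [e3]
    abel
  have part2 : ∀ p q s : g × V,
      (2:F) * BG (mul p q) s
        = BG ((μ p.1 q.1 : g), (0:V)) s + BG ((μ s.1 p.1 : g), (0:V)) q
          + BG ((μ s.1 q.1 : g), (0:V)) p := by
    intro p q s
    have e0 : (2:F) * BG (mul p q) s = BG ((2:F) • mul p q) s := by
      rw [map_smul, LinearMap.smul_apply, smul_eq_mul]
    rw [e0, hmul p q]
    simp only [map_add, map_sub, LinearMap.add_apply, LinearMap.sub_apply]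
    rw [claimB p.1 (h q) s, claimB (h p) q.1 s]
    have r1 : BG ((μ s.1 p.1 : g), (0:V)) q = B (h q) (μ s.1 p.1) := by
      rw [hBGsymm]; exact (hh q _).symm
    have r2 : BG ((μ s.1 q.1 : g), (0:V)) p = - B q.1 (μ s.1 (h p)) := by
      rw [hBGsymm, ← hh p (μ s.1 q.1)]
      calc B (h p) (μ s.1 q.1) = - B (h p) (μ q.1 s.1) := by
            rw [hμskew s.1 q.1, map_neg]
        _ = - B (μ q.1 s.1) (h p) := by rw [hBsymm]
        _ = - B q.1 (μ s.1 (h p)) := by rw [hBinv]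
    rw [r1, r2]
    ring
  have hmulself : ∀ p : g × V, mul p p = k (μ p.1 (h p)) := by
    intro p
    apply cancel
    rw [hmul p p, hμ0 p.1, hμskew (h p) p.1, map_neg, two_smul]
    have hz0 : (((0:g), (0:V)) : g × V) = 0 := rfl
    rw [hz0]
    abel
  have part3 : ∀ p : g × V, (h p = 0 ∨ p ∈ Set.range L) → mul p p = 0 := by
    rintro p (hp0 | ⟨q, rfl⟩)
    · rw [hmulself, hp0, map_zero, map_zero]
    · have hq1 : L q = k q.1 := hL q
      have hfst : (L q).1 = T q.1 := by rw [hq1, hk]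
      have hhp : h (L q) = q.1 := by rw [hq1, hhk]
      rw [hmulself, hhp, hfst, ← hequiv, hμ0, map_zero, map_zero]
  refine ⟨part1, part2, part3, ⟨?_, ?_⟩⟩
  · exact Submodule.disjoint_def.mpr fun p hker hran => by
      obtain ⟨q, rfl⟩ := hran
      have hq0 : q.1 = 0 := by
        have hmem := LinearMap.mem_ker.mp hker
        rwa [hL, hhk] at hmem
      rw [hL, hq0, map_zero]
  · rw [codisjoint_iff, eq_top_iff]
    rintro p -
    refine Submodule.mem_sup.mpr ⟨p - k (h p), ?_, k (h p), ?_, by abel⟩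
    · exact LinearMap.mem_ker.mpr (by rw [map_sub, hhk, sub_self])
    · exact ⟨(h p, 0), by rw [hL]⟩
end

section
/- In the central-extension setup (see context), with 𝒜 := F × G carrying the product (ξ,x)(η,y) = (ξη + B_G(x,y), ξy + ηx + x·y) and unit 1_𝒜 = (1,0), let 𝒜' := 𝒜 / F·1_𝒜 and define μ'((ξ,x) + F1_𝒜, (η,y) + F1_𝒜) := (ξ,x)(η,y) − (η,y)(ξ,x) + F1_𝒜 and T'((ξ,x) + F1_𝒜) := (ξ, L(x)) + F1_𝒜. Then (𝒜', μ', T') is a Hom-Lie algebra and the map ψ : 𝒜' → G, ψ((0,x) + F1_𝒜) = x, is an isomorphism of Hom-Lie algebras from (𝒜', μ', T') onto (G, μ_G, L). -/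
/-- In the central-extension setup, the quotient `𝒜' = 𝒜 / F·1_𝒜` of the algebra
`𝒜 = F × G` carries a Hom-Lie algebra structure `(𝒜', μ', T')` with
`μ'(p̄, q̄) = (pq − qp)‾` and `T'((ξ,x)‾) = (ξ, L(x))‾`, and the map
`ψ : 𝒜' → G`, `ψ((0,x)‾) = x`, is an isomorphism of Hom-Lie algebras onto
`(G, μ_G, L)`. -/
theorem quotient_algebra_homLie_isomorphic_to_G
    {F : Type*} [Field F] [CharZero F] [IsAlgClosed F]
    {g : Type*} [AddCommGroup g] [Module F g] [FiniteDimensional F g]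
    {V : Type*} [AddCommGroup V] [Module F V]
    {r : ℕ} (hr : 0 < r)
    (μ : g →ₗ[F] g →ₗ[F] g) (T : g →ₗ[F] g) (B : g →ₗ[F] g →ₗ[F] F)
    (hμskew : ∀ x y : g, μ x y = - μ y x)
    (hjac : ∀ x y z : g, μ (T x) (μ y z) + μ (T y) (μ z x) + μ (T z) (μ x y) = 0)
    (hequiv : ∀ x y : g, T (μ x y) = μ (T x) y)
    (hBsymm : ∀ x y : g, B x y = B y x)
    (hBnondeg : ∀ x : g, (∀ y : g, B x y = 0) → x = 0)
    (hBinv : ∀ x y z : g, B (μ x y) z = B x (μ y z))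
    (hTsa : ∀ x y : g, B (T x) y = B x (T y))
    (hkerT : Module.finrank F (LinearMap.ker T) = r)
    (𝔞 : Submodule F g) (hcompl : IsCompl 𝔞 (LinearMap.range T))
    (a : Fin r → g) (ha𝔞 : ∀ i, a i ∈ 𝔞)
    (haind : LinearIndependent F a)
    (haspan : Submodule.span F (Set.range a) = 𝔞)
    (v : Module.Basis (Fin r) F V)
    (BG : (g × V) →ₗ[F] (g × V) →ₗ[F] F)
    (hBGsymm : ∀ p q : g × V, BG p q = BG q p)
    (hBG1 : ∀ x y : g, BG (T x, (0 : V)) (T y, (0 : V)) = B (T x) y)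
    (hBG2 : ∀ x ∈ 𝔞, ∀ (u : V) (y : g), BG (x, u) (T y, (0 : V)) = 0)
    (hBG3 : ∀ x ∈ 𝔞, ∀ y ∈ 𝔞, BG (x, (0 : V)) (y, (0 : V)) = 0)
    (hBG4 : ∀ u w : V, BG ((0 : g), u) ((0 : g), w) = 0)
    (hBG5 : ∀ i j : Fin r, BG (a i, (0 : V)) ((0 : g), v j) = if i = j then (1 : F) else 0)
    (k : g →ₗ[F] g × V)
    (hk : ∀ x : g, k x = (T x, ∑ i, B (a i) x • v i))
    (L : (g × V) →ₗ[F] (g × V))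
    (hL : ∀ p : g × V, L p = k p.1)
    (h : (g × V) →ₗ[F] g)
    (hh : ∀ (w : g × V) (z : g), B (h w) z = BG w (z, (0 : V)))
    (mul : g × V → g × V → g × V)
    (hmul : ∀ p q : g × V,
      (2 : F) • mul p q
        = ((μ p.1 q.1 : g), (0 : V)) + k (μ p.1 (h q)) - k (μ (h p) q.1))
    (Amul : F × (g × V) → F × (g × V) → F × (g × V))
    (hAmul : ∀ (ξ η : F) (x y : g × V),
      Amul (ξ, x) (η, y) = (ξ * η + BG x y, ξ • y + η • x + mul x y))
    (N : Submodule F (F × (g × V)))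
    (hN : N = Submodule.span F {((1 : F), (0 : g × V))})
    (μ' : (F × (g × V)) ⧸ N → (F × (g × V)) ⧸ N → (F × (g × V)) ⧸ N)
    (hμ' : ∀ p q : F × (g × V),
      μ' (Submodule.Quotient.mk p) (Submodule.Quotient.mk q)
        = Submodule.Quotient.mk (Amul p q - Amul q p))
    (T' : (F × (g × V)) ⧸ N → (F × (g × V)) ⧸ N)
    (hT' : ∀ (ξ : F) (x : g × V),
      T' (Submodule.Quotient.mk (ξ, x)) = Submodule.Quotient.mk (ξ, L x))
    (ψ : ((F × (g × V)) ⧸ N) →ₗ[F] (g × V))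
    (hψ : ∀ x : g × V, ψ (Submodule.Quotient.mk ((0 : F), x)) = x) :
    (∀ p q : (F × (g × V)) ⧸ N, μ' p q = - μ' q p) ∧
    (∀ p q s : (F × (g × V)) ⧸ N,
      μ' (T' p) (μ' q s) + μ' (T' q) (μ' s p) + μ' (T' s) (μ' p q) = 0) ∧
    Function.Bijective ψ ∧
    (∀ p q : (F × (g × V)) ⧸ N,
      ψ (μ' p q) = ((μ (ψ p).1 (ψ q).1 : g), (0 : V))) ∧
    (∀ p : (F × (g × V)) ⧸ N, ψ (T' p) = L (ψ p)) := by
  classical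
  -- every class has a representative with zero first coordinate
  have hmkA : ∀ (ξ : F) (x : g × V),
      (Submodule.Quotient.mk (ξ, x) : (F × (g × V)) ⧸ N)
        = Submodule.Quotient.mk ((0 : F), x) := by
    intro ξ x
    rw [Submodule.Quotient.eq, hN, Submodule.mem_span_singleton]
    exact ⟨ξ, by simp [Prod.ext_iff]⟩
  have hψ' : ∀ (ξ : F) (x : g × V),
      ψ (Submodule.Quotient.mk (ξ, x)) = x := by
    intro ξ x; rw [hmkA, hψ]
  -- the commutator in the algebra
  have hdiff : ∀ x y : g × V,
      mul x y - mul y x = ((μ x.1 y.1 : g), (0 : V)) := by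
    intro x y
    have key : (2 : F) • (mul x y - mul y x)
        = (2 : F) • (((μ x.1 y.1 : g), (0 : V))) := by
      rw [smul_sub, hmul, hmul, hμskew y.1 x.1, hμskew y.1 (h x), hμskew (h y) x.1,
        map_neg, map_neg]
      have e : ((-μ x.1 y.1 : g), (0 : V)) = -(((μ x.1 y.1 : g), (0 : V))) := by
        simp
      rw [e, two_smul]
      abel
    exact smul_right_injective (g × V) (two_ne_zero) key
  have hcomm : ∀ x y : g × V,
      Amul ((0 : F), x) ((0 : F), y) - Amul ((0 : F), y) ((0 : F), x)
        = ((0 : F), ((μ x.1 y.1 : g), (0 : V))) := by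
    intro x y
    rw [hAmul, hAmul, Prod.mk_sub_mk]
    simp only [Prod.mk.injEq]
    refine ⟨?_, ?_⟩
    · rw [hBGsymm x y]; ring
    · simp only [zero_smul, zero_add]
      rw [hdiff]
  have hμ'0 : ∀ x y : g × V,
      μ' (Submodule.Quotient.mk ((0 : F), x)) (Submodule.Quotient.mk ((0 : F), y))
        = Submodule.Quotient.mk ((0 : F), ((μ x.1 y.1 : g), (0 : V))) := by
    intro x y
    rw [hμ', hcomm]
  have hL1 : ∀ x : g × V, (L x).1 = T x.1 := by
    intro x; rw [hL, hk]
  refine ⟨?_, ?_, ?_, ?_, ?_⟩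
  · -- skew-symmetry of μ'
    intro p q
    obtain ⟨a, rfl⟩ := Submodule.Quotient.mk_surjective N p
    obtain ⟨b, rfl⟩ := Submodule.Quotient.mk_surjective N q
    rw [hμ', hμ', show Amul a b - Amul b a = -(Amul b a - Amul a b) by abel,
      ← Submodule.mkQ_apply, ← Submodule.mkQ_apply, map_neg]
  · -- Hom-Jacobi identity
    intro p q s
    obtain ⟨⟨ξ, x⟩, rfl⟩ := Submodule.Quotient.mk_surjective N p
    obtain ⟨⟨η, y⟩, rfl⟩ := Submodule.Quotient.mk_surjective N q
    obtain ⟨⟨ζ, z⟩, rfl⟩ := Submodule.Quotient.mk_surjective N s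
    have step : ∀ x y z : g × V,
        μ' (T' (Submodule.Quotient.mk ((0 : F), x)))
          (μ' (Submodule.Quotient.mk ((0 : F), y)) (Submodule.Quotient.mk ((0 : F), z)))
        = Submodule.Quotient.mk ((0 : F), ((μ (T x.1) (μ y.1 z.1) : g), (0 : V))) := by
      intro x y z
      rw [hT' 0 x, hμ'0 y z, hμ'0 (L x) (((μ y.1 z.1 : g), (0 : V)))]
      simp [hL1]
    rw [hmkA ξ x, hmkA η y, hmkA ζ z, step x y z, step y z x, step z x y,
      ← Submodule.mkQ_apply, ← Submodule.mkQ_apply, ← Submodule.mkQ_apply,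
      ← map_add, ← map_add]
    have : (((0 : F), ((μ (T x.1) (μ y.1 z.1) : g), (0 : V)))
        + ((0 : F), ((μ (T y.1) (μ z.1 x.1) : g), (0 : V))))
        + ((0 : F), ((μ (T z.1) (μ x.1 y.1) : g), (0 : V)))
        = (0 : F × (g × V)) := by
      have := hjac x.1 y.1 z.1
      simp [Prod.ext_iff, add_assoc]
      rw [← add_assoc]
      exact this
    rw [this, map_zero]
  · -- bijectivity of ψ
    constructor
    · intro p q hpq
      obtain ⟨⟨ξ, x⟩, rfl⟩ := Submodule.Quotient.mk_surjective N p
      obtain ⟨⟨η, y⟩, rfl⟩ := Submodule.Quotient.mk_surjective N q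
      rw [hψ' ξ x, hψ' η y] at hpq
      rw [hmkA ξ x, hmkA η y, hpq]
    · intro y
      exact ⟨Submodule.Quotient.mk ((0 : F), y), hψ y⟩
  · -- ψ intertwines the brackets
    intro p q
    obtain ⟨⟨ξ, x⟩, rfl⟩ := Submodule.Quotient.mk_surjective N p
    obtain ⟨⟨η, y⟩, rfl⟩ := Submodule.Quotient.mk_surjective N q
    rw [hmkA ξ x, hmkA η y, hμ'0, hψ, hψ, hψ]
  · -- ψ intertwines the twist maps
    intro p
    obtain ⟨⟨ξ, x⟩, rfl⟩ := Submodule.Quotient.mk_surjective N p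
    rw [hmkA ξ x, hT', hψ, hψ]
end

section
/- Let (g, [·,·], B) be a quadratic Lie algebra over an algebraically closed field of characteristic zero, let V be an r-dimensional vector space with r > 0, and let (G = g ⊕ V, [·,·]_G) be a central extension of (g, [·,·]) by V (i.e. [x+u, y+v]_G = [x,y] + θ(x,y) for a 2-cocycle θ : g × g → V, and V is central in G). Suppose (G, [·,·]_G) admits an invariant nondegenerate symmetric bilinear form B_G (B_G([a,b]_G, c) = B_G(a, [b,c]_G)) for which V is isotropic (B_G(V,V) = 0). Then there exist a skew-symmetric bilinear map μ : g × g → g and a linear map T : g → g such that (g, μ, T, B) is a quadratic Hom-Lie algebra with μ-equivariant T, [x,y] = T(μ(x,y)) = μ(T(x), y) for all x, y ∈ g, and dim Ker(T) = r. -/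
open Module LinearMap
set_option maxRecDepth 16000
set_option maxHeartbeats 2000000

section AuxHom

variable {F : Type*} [Field F]
  {g : Type*} [LieRing g] [LieAlgebra F g]
  {V : Type*} [AddCommGroup V] [Module F V]

/-- The bilinear map `(y, z) ↦ (⁅y, z⁆, θ y z)` into the central extension. -/
noncomputable def auxD (θ : g →ₗ[F] g →ₗ[F] V) : g →ₗ[F] g →ₗ[F] g × V :=
  LinearMap.mk₂ F (fun y z => (⁅y, z⁆, θ y z))
    (fun m n z => by simp [add_lie, Prod.mk_add_mk])
    (fun c m z => by simp [smul_lie, Prod.smul_mk])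
    (fun m n z => by simp [lie_add, Prod.mk_add_mk])
    (fun c m z => by simp [lie_smul, Prod.smul_mk])

@[simp] lemma auxD_apply (θ : g →ₗ[F] g →ₗ[F] V) (y z : g) :
    auxD θ y z = (⁅y, z⁆, θ y z) := rfl

end AuxHom

/-- If a quadratic Lie algebra `(g, [·,·], B)` has a central extension
`G = g ⊕ V` by an `r`-dimensional space `V` (`r > 0`) admitting an invariant
nondegenerate symmetric bilinear form `B_G` for which `V` is isotropic, then there
is a quadratic Hom-Lie algebra structure `(g, μ, T, B)` with `μ`-equivariant `T`
such that `[x,y] = T(μ(x,y)) = μ(T(x), y)` and `dim Ker(T) = r`. -/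
theorem quadratic_homLie_from_metric_central_extension
    {F : Type*} [Field F] [CharZero F] [IsAlgClosed F]
    {g : Type*} [LieRing g] [LieAlgebra F g] [Module.Finite F g]
    {V : Type*} [AddCommGroup V] [Module F V] [FiniteDimensional F V]
    {r : ℕ} (hr : 0 < r) (hV : Module.finrank F V = r)
    (B : g →ₗ[F] g →ₗ[F] F)
    (hBsymm : ∀ x y : g, B x y = B y x)
    (hBnondeg : ∀ x : g, (∀ y : g, B x y = 0) → x = 0)
    (hBinv : ∀ x y z : g, B ⁅x, y⁆ z = B x ⁅y, z⁆)
    (θ : g →ₗ[F] g →ₗ[F] V)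
    (hθskew : ∀ x y : g, θ x y = - θ y x)
    (hθcocycle : ∀ x y z : g, θ ⁅x, y⁆ z + θ ⁅y, z⁆ x + θ ⁅z, x⁆ y = 0)
    (brG : g × V → g × V → g × V)
    (hbrG : ∀ p q : g × V, brG p q = (⁅p.1, q.1⁆, θ p.1 q.1))
    (BG : (g × V) →ₗ[F] (g × V) →ₗ[F] F)
    (hBGsymm : ∀ p q : g × V, BG p q = BG q p)
    (hBGnondeg : ∀ p : g × V, (∀ q : g × V, BG p q = 0) → p = 0)
    (hBGinv : ∀ p q s : g × V, BG (brG p q) s = BG p (brG q s))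
    (hViso : ∀ u w : V, BG ((0 : g), u) ((0 : g), w) = 0) :
    ∃ (μ : g →ₗ[F] g →ₗ[F] g) (T : g →ₗ[F] g),
      (∀ x y : g, μ x y = - μ y x) ∧
      (∀ x y z : g, μ (T x) (μ y z) + μ (T y) (μ z x) + μ (T z) (μ x y) = 0) ∧
      (∀ x y : g, T (μ x y) = μ (T x) y) ∧
      (∀ x y : g, T (μ x y) = ⁅x, y⁆) ∧
      (∀ x y z : g, B (μ x y) z = B x (μ y z)) ∧
      (∀ x y : g, B (T x) y = B x (T y)) ∧
      Module.finrank F (LinearMap.ker T) = r := by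
  classical
  set D : g →ₗ[F] g →ₗ[F] g × V := auxD θ with hDdef
  have hD : ∀ y z : g, D y z = (⁅y, z⁆, θ y z) := fun y z => rfl
  -- splitting of BG in each argument
  have hsplit : ∀ (a : g) (u : V) (s : g × V),
      BG (a, u) s = BG (a, 0) s + BG ((0 : g), u) s := by
    intro a u s
    have h : ((a, u) : g × V) = (a, 0) + ((0 : g), u) := by simp
    rw [h, map_add, LinearMap.add_apply]
  have hsplit' : ∀ (s : g × V) (a : g) (u : V),
      BG s (a, u) = BG s (a, 0) + BG s ((0 : g), u) := by
    intro s a u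
    have h : ((a, u) : g × V) = (a, 0) + ((0 : g), u) := by simp
    rw [h, map_add]
  -- invariance in D-form
  have hinvD : ∀ (p s : g × V) (b : g), BG (D p.1 b) s = BG p (D b s.1) := by
    intro p s b
    have h := hBGinv p (b, 0) s
    rw [hbrG, hbrG] at h
    rw [hD, hD]
    exact h
  -- skew-symmetry of D
  have hDskew : ∀ y z : g, D y z = - D z y := by
    intro y z
    rw [hD, hD]
    simp only [Prod.neg_mk, Prod.mk.injEq]
    exact ⟨(lie_skew y z).symm, hθskew y z⟩
  -- the pairing with V and the subspace H = W-perp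
  set pl : g →ₗ[F] g × V := LinearMap.inl F g V with hpl
  set pr : V →ₗ[F] g × V := LinearMap.inr F g V with hpr
  set f : g →ₗ[F] Module.Dual F V := (BG.comp pl).compl₂ pr with hfdef
  have hf : ∀ (x : g) (v : V), f x v = BG (x, 0) ((0 : g), v) := fun x v => rfl
  set H : Submodule F g := LinearMap.ker f with hHdef
  have hmemH : ∀ x : g, x ∈ H ↔ ∀ v : V, BG (x, 0) ((0 : g), v) = 0 := by
    intro x
    constructor
    · intro hx v
      rw [← hf]
      rw [hHdef, LinearMap.mem_ker] at hx
      rw [hx]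
      rfl
    · intro hx
      rw [hHdef, LinearMap.mem_ker]
      ext v
      exact hx v
  set Ψ : g →ₗ[F] g →ₗ[F] F := (BG.comp pl).compl₂ pl with hΨdef
  have hΨ : ∀ a b : g, Ψ a b = BG (a, 0) (b, 0) := fun a b => rfl
  have hΨsymm : ∀ a b : g, Ψ a b = Ψ b a := by
    intro a b; rw [hΨ, hΨ, hBGsymm]
  -- brackets lie in H
  have hbrH : ∀ y z : g, (⁅y, z⁆ : g) ∈ H := by
    intro y z
    rw [hmemH]
    intro v
    have h1 : BG (D y z) ((0 : g), v) = 0 := by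
      have h := hinvD (y, 0) ((0 : g), v) z
      have h2 : D z ((((0 : g), v) : g × V)).1 = 0 := by
        rw [hD]; simp
      rw [h2, map_zero] at h
      simpa using h
    have h3 : ((⁅y, z⁆, (0 : V)) : g × V) = D y z - ((0 : g), θ y z) := by
      rw [hD]; simp
    rw [h3, map_sub, LinearMap.sub_apply, h1, hViso, sub_zero]
  -- BG as a bijection onto the dual
  have hBGinj : Function.Injective (BG : (g × V) →ₗ[F] Module.Dual F (g × V)) := by
    rw [← LinearMap.ker_eq_bot]
    refine (Submodule.eq_bot_iff _).mpr ?_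
    intro p hp
    rw [LinearMap.mem_ker] at hp
    exact hBGnondeg p (fun q => by rw [hp]; rfl)
  have hdualG : Module.finrank F (g × V) = Module.finrank F (Module.Dual F (g × V)) :=
    Subspace.dual_finrank_eq.symm
  have hBGsurj : Function.Surjective (BG : (g × V) →ₗ[F] Module.Dual F (g × V)) :=
    (LinearMap.injective_iff_surjective_of_finrank_eq_finrank hdualG).mp hBGinj
  -- the subspace S of G orthogonal to V, and its dual annihilator
  set PG : (g × V) →ₗ[F] Module.Dual F V := BG.compl₂ pr with hPGdef
  have hPG : ∀ (q : g × V) (v : V), PG q v = BG q ((0 : g), v) := fun q v => rfl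
  set S : Submodule F (g × V) := LinearMap.ker PG with hSdef
  have hmemS : ∀ q : g × V, q ∈ S ↔ ∀ v : V, BG q ((0 : g), v) = 0 := by
    intro q
    rw [hSdef, LinearMap.mem_ker]
    constructor
    · intro hq v; rw [← hPG, hq]; rfl
    · intro hq; ext v; exact hq v
  have hPGsurj : Function.Surjective PG := by
    intro ψ
    obtain ⟨q, hq⟩ := hBGsurj (ψ.comp (LinearMap.snd F g V))
    refine ⟨q, ?_⟩
    ext v
    have : BG q ((0 : g), v) = (ψ.comp (LinearMap.snd F g V)) ((0 : g), v) := by rw [hq]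
    rw [hPG]
    simpa using this
  have hfinG : Module.finrank F (g × V) = Module.finrank F g + r := by
    rw [Module.finrank_prod, hV]
  have hdualV : Module.finrank F (Module.Dual F V) = r := by
    rw [Subspace.dual_finrank_eq, hV]
  have hSrank : Module.finrank F S = Module.finrank F g := by
    have h := LinearMap.finrank_range_add_finrank_ker PG
    rw [LinearMap.range_eq_top.mpr hPGsurj] at h
    rw [finrank_top F (Module.Dual F V), hdualV, ← hSdef] at h
    omega
  have hArank : Module.finrank F (Submodule.dualAnnihilator S) = r := by
    have h2 := Submodule.finrank_quotient_add_finrank S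
    have e : Module.finrank F ((g × V) ⧸ S) = Module.finrank F (Submodule.dualAnnihilator S) :=
      LinearEquiv.finrank_eq (Subspace.quotEquivAnnihilator S)
    rw [e] at h2
    rw [hfinG, hSrank] at h2
    omega
  -- the image of V inside the dual annihilator of S
  set X : Submodule F (Module.Dual F (g × V)) :=
    LinearMap.range ((BG : (g × V) →ₗ[F] Module.Dual F (g × V)).comp pr) with hXdef
  have hXle : X ≤ Submodule.dualAnnihilator S := by
    rintro φ ⟨v, rfl⟩
    rw [Submodule.mem_dualAnnihilator]
    intro w hw
    have : ((BG : (g × V) →ₗ[F] Module.Dual F (g × V)).comp pr) v w = BG ((0 : g), v) w := rfl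
    rw [this, hBGsymm]
    exact (hmemS w).mp hw v
  have hXrank : Module.finrank F X = r := by
    have hinj : Function.Injective ((BG : (g × V) →ₗ[F] Module.Dual F (g × V)).comp pr) := by
      intro v v' hvv
      have h1 : BG ((0 : g), v) = BG ((0 : g), v') := hvv
      have h2 := hBGinj h1
      exact congrArg Prod.snd h2
    rw [hXdef, LinearMap.finrank_range_of_inj hinj, hV]
  have hXeq : X = Submodule.dualAnnihilator S := by
    refine Submodule.eq_of_le_of_finrank_le hXle ?_
    rw [hXrank, hArank]
  -- Claim A : the form Ψ restricted to H is nondegenerate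
  have claimA : ∀ a : g, a ∈ H → (∀ b : g, b ∈ H → Ψ a b = 0) → a = 0 := by
    intro a haH h0
    have hq : (BG : (g × V) →ₗ[F] Module.Dual F (g × V)) ((a, 0) : g × V)
        ∈ Submodule.dualAnnihilator S := by
      rw [Submodule.mem_dualAnnihilator]
      intro w hw
      have hw1 : w.1 ∈ H := by
        rw [hmemH]
        intro v
        have h1 := (hmemS w).mp hw v
        have h2 : ((w.1, w.2) : g × V) = w := rfl
        have h3 := hsplit w.1 w.2 ((0 : g), v)
        rw [h2] at h3
        rw [h1, hViso] at h3
        simpa using h3.symm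
      have hw2 : BG ((a, 0) : g × V) w = Ψ a w.1 + f a w.2 := by
        have h3 := hsplit' ((a, 0) : g × V) w.1 w.2
        have h2 : ((w.1, w.2) : g × V) = w := rfl
        rw [h2] at h3
        rw [h3, hΨ, hf]
      rw [hw2, h0 w.1 hw1, hf, (hmemH a).mp haH w.2, add_zero]
    rw [← hXeq] at hq
    obtain ⟨v, hv⟩ := hq
    have h5 : ((0 : g), v) = ((a, 0) : g × V) := hBGinj hv
    have := (Prod.mk.injEq _ _ _ _).mp h5 |>.1
    exact this.symm ▸ rfl
  -- rank of the range of f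
  have hferank : Module.finrank F (LinearMap.range f) = r := by
    have huinj : Function.Injective f.flip := by
      rw [← LinearMap.ker_eq_bot]
      refine (Submodule.eq_bot_iff _).mpr ?_
      intro v hv
      rw [LinearMap.mem_ker] at hv
      have h1 : ∀ x : g, BG (x, 0) ((0 : g), v) = 0 := by
        intro x
        have h2 : f x v = 0 := by
          rw [show f x v = f.flip v x from rfl, hv]; rfl
        rw [← hf]; exact h2
      have h2 : (((0 : g), v) : g × V) = 0 := by
        apply hBGnondeg
        intro q
        rw [hBGsymm]
        have h3 : ((q.1, q.2) : g × V) = q := rfl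
        have h4 := hsplit q.1 q.2 ((0 : g), v)
        rw [h3] at h4
        rw [h4, h1 q.1, hViso, add_zero]
      exact congrArg Prod.snd h2
    have hfeq : f = (f.flip).dualMap.comp (Module.Dual.eval F g) := by
      ext x v; rfl
    rw [hfeq, LinearMap.range_comp,
      LinearMap.range_eq_top.mpr (Module.bijective_dual_eval F g).2,
      Submodule.map_top, LinearMap.finrank_range_dualMap_eq_finrank_range,
      LinearMap.finrank_range_of_inj huinj, hV]
  have hHrank : Module.finrank F H + r = Module.finrank F g := by
    have h := LinearMap.finrank_range_add_finrank_ker f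
    rw [hferank, ← hHdef] at h
    omega
  -- the restriction of Ψ to H, as a map to the dual of H
  set ΨH : H →ₗ[F] Module.Dual F H :=
    ((Ψ.comp H.subtype).compl₂ H.subtype : H →ₗ[F] H →ₗ[F] F) with hΨHdef
  have hΨH : ∀ a b : H, ΨH a b = Ψ (a : g) (b : g) := fun a b => rfl
  have hΨHinj : Function.Injective ΨH := by
    rw [← LinearMap.ker_eq_bot]
    refine (Submodule.eq_bot_iff _).mpr ?_
    intro h hh
    rw [LinearMap.mem_ker] at hh
    have h0 : ∀ b : g, b ∈ H → Ψ (h : g) b = 0 := by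
      intro b hb
      have h1 : ΨH h ⟨b, hb⟩ = 0 := by rw [hh]; rfl
      rw [hΨH] at h1
      exact h1
    exact Subtype.ext (claimA (h : g) h.2 h0)
  have hΨHbij : Function.Bijective ΨH :=
    ⟨hΨHinj, (LinearMap.injective_iff_surjective_of_finrank_eq_finrank
      Subspace.dual_finrank_eq.symm).mp hΨHinj⟩
  set eΨ : H ≃ₗ[F] Module.Dual F H := LinearEquiv.ofBijective ΨH hΨHbij with heΨ
  set Φ : g →ₗ[F] Module.Dual F H :=
    (H.subtype.dualMap).comp (B : g →ₗ[F] Module.Dual F g) with hΦdef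
  have hΦ : ∀ (x : g) (w : H), Φ x w = B x (w : g) := fun x w => rfl
  set T : g →ₗ[F] g := H.subtype.comp ((eΨ.symm : Module.Dual F H →ₗ[F] H).comp Φ) with hTdef
  have hTmem : ∀ x : g, T x ∈ H := fun x => (eΨ.symm (Φ x)).2
  have hTprop : ∀ (x : g) (w : H), Ψ (T x) (w : g) = B x (w : g) := by
    intro x w
    have h1 : ΨH (eΨ.symm (Φ x)) = Φ x := eΨ.apply_symm_apply (Φ x)
    calc Ψ (T x) (w : g) = ΨH (eΨ.symm (Φ x)) w := rfl
      _ = Φ x w := by rw [h1]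
      _ = B x (w : g) := rfl
  have hTsa : ∀ x y : g, B (T x) y = B x (T y) := by
    intro x y
    have h1 : B x (T y) = Ψ (T x) (T y) := (hTprop x ⟨T y, hTmem y⟩).symm
    have h2 : B y (T x) = Ψ (T y) (T x) := (hTprop y ⟨T x, hTmem x⟩).symm
    rw [hBsymm (T x) y, h2, hΨsymm, ← h1]
  -- B as a bijection onto the dual, and the product μ
  have hBinj : Function.Injective (B : g →ₗ[F] Module.Dual F g) := by
    rw [← LinearMap.ker_eq_bot]
    refine (Submodule.eq_bot_iff _).mpr ?_
    intro x hx
    rw [LinearMap.mem_ker] at hx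
    exact hBnondeg x (fun y => by rw [hx]; rfl)
  have hBbij : Function.Bijective (B : g →ₗ[F] Module.Dual F g) :=
    ⟨hBinj, (LinearMap.injective_iff_surjective_of_finrank_eq_finrank
      Subspace.dual_finrank_eq.symm).mp hBinj⟩
  set eB : g ≃ₗ[F] Module.Dual F g := LinearEquiv.ofBijective _ hBbij with heB
  set ρ : g →ₗ[F] g →ₗ[F] Module.Dual F g :=
    (((LinearMap.llcomp F g (g × V) F).comp (BG.comp pl)).compl₂ D) with hρdef
  have hρ : ∀ x y z : g, ρ x y z = BG (x, 0) (D y z) := fun x y z => rfl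
  set μ : g →ₗ[F] g →ₗ[F] g := ρ.compr₂ (eB.symm : Module.Dual F g →ₗ[F] g) with hμdef
  have hμB : ∀ x y z : g, B (μ x y) z = BG (x, 0) (D y z) := by
    intro x y z
    have h1 : (B : g →ₗ[F] Module.Dual F g) (eB.symm (ρ x y)) = ρ x y :=
      eB.apply_symm_apply (ρ x y)
    have h2 : B (μ x y) z = ((B : g →ₗ[F] Module.Dual F g) (eB.symm (ρ x y))) z := rfl
    rw [h2, h1]
    rfl
  -- symmetry identities for the trilinear form
  have hswap : ∀ x y z : g, BG (x, 0) (D y z) = BG (D x y) ((z, 0) : g × V) := by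
    intro x y z
    exact (hinvD ((x, 0) : g × V) ((z, 0) : g × V) y).symm
  have halt12 : ∀ x y z : g, BG (x, 0) (D y z) = - BG (y, 0) (D x z) := by
    intro x y z
    rw [hswap x y z, hswap y x z, hDskew x y, map_neg, LinearMap.neg_apply]
  have halt23 : ∀ x y z : g, BG (x, 0) (D y z) = - BG (x, 0) (D z y) := by
    intro x y z
    rw [hDskew y z, map_neg]
  have hcyc : ∀ x y z : g, BG (x, 0) (D y z) = BG (y, 0) (D z x) := by
    intro x y z
    rw [halt12 x y z, halt23 y x z, neg_neg]
  -- evaluation of the trilinear form on T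
  have hI3 : ∀ x y z : g, BG ((T x), (0 : V)) (D y z) = B x ⁅y, z⁆ := by
    intro x y z
    have hd : D y z = ((⁅y, z⁆, (0 : V)) : g × V) + (((0 : g), θ y z) : g × V) := by
      rw [hD]; simp
    rw [hd, map_add]
    have h1 : BG ((T x), (0 : V)) (((0 : g), θ y z) : g × V) = 0 :=
      (hmemH (T x)).mp (hTmem x) (θ y z)
    have h2 : BG ((T x), (0 : V)) ((⁅y, z⁆, (0 : V)) : g × V) = B x ⁅y, z⁆ := by
      have h3 := hTprop x ⟨⁅y, z⁆, hbrH y z⟩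
      rw [hΨ] at h3
      exact h3
    rw [h1, h2, add_zero]
  have hI3' : ∀ (x a w : g), B (μ (T x) a) w = B x ⁅a, w⁆ := by
    intro x a w; rw [hμB]; exact hI3 x a w
  -- auxiliary annihilation identities
  have hDH : ∀ (y z : g) (v : V), BG (D y z) (((0 : g), v) : g × V) = 0 := by
    intro y z v
    have h3 := hsplit ⁅y, z⁆ (θ y z) (((0 : g), v) : g × V)
    rw [← hD y z] at h3
    rw [h3, (hmemH ⁅y, z⁆).mp (hbrH y z) v, hViso, add_zero]
  have hnest : ∀ x y z w : g, BG (D y z) (D x w) = BG (D ⁅y, z⁆ x) ((w, 0) : g × V) := by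
    intro x y z w
    have h := hinvD (D y z) ((w, 0) : g × V) x
    have h1 : (D y z).1 = ⁅y, z⁆ := by rw [hD]
    rw [h1] at h
    exact h.symm
  have hkey : ∀ x y z w : g,
      B (μ (T x) (μ y z)) w = - BG (D ⁅y, z⁆ x) ((w, 0) : g × V) := by
    intro x y z w
    rw [hI3' x (μ y z) w]
    have h1 : (⁅μ y z, w⁆ : g) = -⁅w, μ y z⁆ := (lie_skew _ _).symm
    rw [h1, map_neg, ← hBinv x w (μ y z), hBsymm ⁅x, w⁆ (μ y z), hμB y z ⁅x, w⁆,
      hswap y z ⁅x, w⁆]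
    have h2 : ((⁅x, w⁆, (0 : V)) : g × V) = D x w - (((0 : g), θ x w) : g × V) := by
      rw [hD]; simp
    rw [h2, map_sub, hDH y z (θ x w), sub_zero, hnest x y z w]
  have hjacsum : ∀ x y z : g, D ⁅y, z⁆ x + D ⁅z, x⁆ y + D ⁅x, y⁆ z = 0 := by
    intro x y z
    rw [hD, hD, hD]
    have e1 : (⁅⁅y, z⁆, x⁆ : g) = -⁅x, ⁅y, z⁆⁆ := by rw [← lie_skew x ⁅y, z⁆, neg_neg]
    have e2 : (⁅⁅z, x⁆, y⁆ : g) = -⁅y, ⁅z, x⁆⁆ := by rw [← lie_skew y ⁅z, x⁆, neg_neg]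
    have e3 : (⁅⁅x, y⁆, z⁆ : g) = -⁅z, ⁅x, y⁆⁆ := by rw [← lie_skew z ⁅x, y⁆, neg_neg]
    have hlie : (⁅⁅y, z⁆, x⁆ : g) + ⁅⁅z, x⁆, y⁆ + ⁅⁅x, y⁆, z⁆ = 0 := by
      rw [e1, e2, e3, ← neg_add, ← neg_add, lie_jacobi x y z, neg_zero]
    have hth : θ ⁅y, z⁆ x + θ ⁅z, x⁆ y + θ ⁅x, y⁆ z = 0 := hθcocycle y z x
    rw [Prod.mk_add_mk, Prod.mk_add_mk, Prod.mk_eq_zero]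
    exact ⟨hlie, hth⟩
  have hHomJac : ∀ x y z : g, μ (T x) (μ y z) + μ (T y) (μ z x) + μ (T z) (μ x y) = 0 := by
    intro x y z
    apply hBnondeg
    intro w
    rw [map_add, map_add, LinearMap.add_apply, LinearMap.add_apply,
      hkey x y z w, hkey y z x w, hkey z x y w, ← neg_add, ← neg_add,
      ← LinearMap.add_apply, ← LinearMap.add_apply, ← map_add, ← map_add,
      hjacsum x y z, map_zero, LinearMap.zero_apply, neg_zero]
  -- extensionality through B
  have hBext : ∀ a b : g, (∀ z : g, B a z = B b z) → a = b := by
    intro a b hab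
    have h : a - b = 0 :=
      hBnondeg _ (fun z => by rw [map_sub, LinearMap.sub_apply, hab z, sub_self])
    exact sub_eq_zero.mp h
  -- the seven properties
  have hskewμ : ∀ x y : g, μ x y = - μ y x := by
    intro x y
    refine hBext _ _ (fun z => ?_)
    rw [hμB x y z, map_neg, LinearMap.neg_apply, hμB y x z, halt12 x y z]
  have hTμ : ∀ x y : g, T (μ x y) = ⁅x, y⁆ := by
    intro x y
    refine hBext _ _ (fun z => ?_)
    rw [hBsymm (T (μ x y)) z, ← hTsa z (μ x y)]
    rw [hBsymm (T z) (μ x y), hμB x y (T z), hcyc x y (T z), hcyc y (T z) x]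
    rw [hI3 z x y, hBsymm z ⁅x, y⁆, hBsymm ⁅x, y⁆ z]
  have hequiv : ∀ x y : g, T (μ x y) = μ (T x) y := by
    intro x y
    rw [hTμ x y]
    refine hBext _ _ (fun z => ?_)
    rw [hμB (T x) y z]
    rw [hI3 x y z, ← hBinv x y z]
  have hBinvμ : ∀ x y z : g, B (μ x y) z = B x (μ y z) := by
    intro x y z
    rw [hμB x y z, hcyc x y z, ← hμB y z x, hBsymm x (μ y z), hBsymm (μ y z) x]
  -- the kernel of T has dimension r
  have hkerT : LinearMap.ker T = LinearMap.ker Φ := by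
    ext x
    simp only [LinearMap.mem_ker]
    constructor
    · intro hx
      have h1 : ((eΨ.symm (Φ x) : H) : g) = 0 := hx
      have h2 : (eΨ.symm (Φ x) : H) = 0 := Subtype.ext h1
      exact (LinearEquiv.map_eq_zero_iff eΨ.symm).mp h2
    · intro hx
      show H.subtype (eΨ.symm (Φ x)) = 0
      rw [hx, show (eΨ.symm (0 : Module.Dual F H)) = 0 from eΨ.symm.map_zero, map_zero]
  have hΦsurj : Function.Surjective Φ := by
    have h1 : Function.Surjective (H.subtype.dualMap) :=
      LinearMap.dualMap_surjective_of_injective (Submodule.injective_subtype H)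
    have h2 : Function.Surjective (B : g →ₗ[F] Module.Dual F g) := hBbij.2
    rw [hΦdef, LinearMap.coe_comp]
    exact h1.comp h2
  have hkerrank : Module.finrank F (LinearMap.ker Φ) = r := by
    have h := LinearMap.finrank_range_add_finrank_ker Φ
    rw [LinearMap.range_eq_top.mpr hΦsurj, finrank_top F (Module.Dual F H),
      Subspace.dual_finrank_eq] at h
    omega
  exact ⟨μ, T, hskewμ, hHomJac, hequiv, hTμ, hBinvμ, hTsa, by rw [hkerT]; exact hkerrank⟩
end
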